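/- arXiv:2012.00181 — 9 statements merged into one kernel-verified Lean document; each statement's English description precedes it below -/
import Mathlib

section
/- Let a > 0 and let X : ℝ → ℝ be a C² vector field on [0,a] with X(0) = X(a) = 0, and set C₁ := sup_{x∈[0,a]} |X'(x)| and C₂ := sup_{x∈[0,a]} |X''(x)|, with C₁ > 0. Let (t,x) ↦ f^t(x) be a flow of X on [0,a], i.e. f⁰ = id, each f^t maps [0,a] to [0,a], for every x ∈ [0,a] the map t ↦ f^t(x) has derivative X(f^t(x)), and each f^t is twice differentiable in x with positive first derivative Df^t. Then for every t ≥ 0 the function x ↦ log Df^t(x) is Lipschitz on [0,a] with Lipschitz constant (C₂/C₁)(e^{C₁ t} − 1); equivalently, |D log Df^t(x)| ≤ (C₂/C₁)(e^{C₁ t} − 1) for all x ∈ [0,a]. -/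
/-!
Linearizing the flow along the orbit of `x`, Grönwall's inequality shows that `F t y - F t x`
agrees with `(y - x) * exp (∫ τ in 0..t, X' (F τ x))` up to `O(|y - x| ^ 2)`, so
`DF t x = exp (∫ τ in 0..t, X' (F τ x))`. Hence `log DF t y - log DF t x` is the integral of
`X' (F τ y) - X' (F τ x)`, which is at most `C₂ * exp (C₁ * τ) * |y - x|` because Grönwall also
gives `|F τ y - F τ x| ≤ exp (C₁ * τ) * |y - x|`. Integrating over `[0, t]` gives the bound.
-/

open Set Real intervalIntegral Filter Asymptotics

structure IsFlowOn (X : ℝ → ℝ) (s : Set ℝ) (F : ℝ → ℝ → ℝ) : Prop where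
  map_zero : ∀ x ∈ s, F 0 x = x
  mapsTo : ∀ t, MapsTo (F t) s s
  hasDerivAt : ∀ x ∈ s, ∀ t, HasDerivAt (fun τ => F τ x) (X (F t x)) t

theorem abs_le_sSup_abs_image {g : ℝ → ℝ} {K : Set ℝ} (hK : IsCompact K) (hg : ContinuousOn g K)
    {z : ℝ} (hz : z ∈ K) : |g z| ≤ sSup ((fun x => |g x|) '' K) :=
  le_csSup (hK.image_of_continuousOn (continuous_abs.comp_continuousOn hg)).bddAbove
    (mem_image_of_mem _ hz)

theorem gronwallBound_δ0_mul (K ε c x : ℝ) :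
    gronwallBound 0 K (ε * c) x = gronwallBound 0 K ε x * c := by
  simp only [gronwallBound]
  split_ifs <;> ring

theorem Convex.abs_sub_le_of_abs_deriv_le {f : ℝ → ℝ} {s : Set ℝ} {C : ℝ} (hs : Convex ℝ s)
    (hf : ∀ z ∈ s, DifferentiableAt ℝ f z) (hC : ∀ z ∈ s, |deriv f z| ≤ C)
    {u v : ℝ} (hu : u ∈ s) (hv : v ∈ s) : |f v - f u| ≤ C * |v - u| :=
  hs.norm_image_sub_le_of_norm_deriv_le hf hC hu hv

theorem Convex.abs_sub_sub_deriv_mul_le {f : ℝ → ℝ} {s : Set ℝ} {C : ℝ} (hs : Convex ℝ s)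
    (hf : Differentiable ℝ f) (hf' : Differentiable ℝ (deriv f))
    (hC : ∀ z ∈ s, |deriv (deriv f) z| ≤ C) {u v : ℝ} (hu : u ∈ s) (hv : v ∈ s) :
    |f v - f u - deriv f u * (v - u)| ≤ C * |v - u| ^ 2 := by
  have hC₀ : 0 ≤ C := (abs_nonneg _).trans (hC u hu)
  have hseg : uIcc u v ⊆ s := hs.ordConnected.uIcc_subset hu hv
  have hbound : ∀ z ∈ uIcc u v, |deriv f z - deriv f u| ≤ C * |v - u| := fun z hz =>
    (hs.abs_sub_le_of_abs_deriv_le (fun z _ => hf' z) hC hu (hseg hz)).trans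
      (mul_le_mul_of_nonneg_left (abs_sub_left_of_mem_uIcc hz) hC₀)
  have := (convex_uIcc u v).norm_image_sub_le_of_norm_hasDerivWithin_le
    (f := fun z => f z - deriv f u * z) (f' := fun z => deriv f z - deriv f u)
    (fun z _ => ((hf z).hasDerivAt.sub ((hasDerivAt_id z).const_mul _)).hasDerivWithinAt
      |>.congr_deriv (by ring)) hbound left_mem_uIcc right_mem_uIcc
  calc |f v - f u - deriv f u * (v - u)| = |f v - deriv f u * v - (f u - deriv f u * u)| := by
        ring_nf
    _ ≤ C * |v - u| * |v - u| := this
    _ = C * |v - u| ^ 2 := by ring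

theorem hasDerivWithinAt_of_abs_sub_sub_le_sq {f : ℝ → ℝ} {s : Set ℝ} {x L M : ℝ}
    (h : ∀ y ∈ s, |f y - f x - (y - x) * L| ≤ M * |y - x| ^ 2) : HasDerivWithinAt f L s x := by
  rw [hasDerivWithinAt_iff_isLittleO]
  refine IsBigO.trans_isLittleO ?_ ((isLittleO_pow_sub_sub x one_lt_two).mono nhdsWithin_le_nhds)
  refine IsBigO.of_bound M (eventually_nhdsWithin_of_forall fun y hy => ?_)
  simpa using h y hy

section Flow

variable {X : ℝ → ℝ} {s : Set ℝ} {F : ℝ → ℝ → ℝ}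

theorem IsFlowOn.continuous_orbit (hF : IsFlowOn X s F) {x : ℝ} (hx : x ∈ s) :
    Continuous fun τ => F τ x :=
  continuous_iff_continuousAt.2 fun t => (hF.hasDerivAt x hx t).continuousAt

theorem IsFlowOn.abs_sub_le {K : ℝ} (hF : IsFlowOn X s F)
    (hX : ∀ u ∈ s, ∀ v ∈ s, |X v - X u| ≤ K * |v - u|) {t : ℝ} (ht : 0 ≤ t)
    {x y : ℝ} (hx : x ∈ s) (hy : y ∈ s) : |F t y - F t x| ≤ |y - x| * exp (K * t) := by
  have := norm_le_gronwallBound_of_norm_deriv_right_le (f := fun τ => F τ y - F τ x)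
    (f' := fun τ => X (F τ y) - X (F τ x)) (δ := |y - x|) (K := K) (ε := 0) (a := 0) (b := t)
    ((hF.continuous_orbit hy).sub (hF.continuous_orbit hx)).continuousOn
    (fun τ _ => ((hF.hasDerivAt y hy τ).sub (hF.hasDerivAt x hx τ)).hasDerivWithinAt)
    (by simp [hF.map_zero x hx, hF.map_zero y hy])
    (fun τ _ => by simpa using hX _ (hF.mapsTo τ hx) _ (hF.mapsTo τ hy)) t ⟨ht, le_rfl⟩
  simpa [gronwallBound_ε0] using this

theorem IsFlowOn.abs_sub_sub_mul_exp_integral_le {C₁ C₂ : ℝ} (hF : IsFlowOn X s F)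
    (hs : Convex ℝ s) (hX : ContDiff ℝ 2 X) (hX₁ : ∀ z ∈ s, |deriv X z| ≤ C₁)
    (hX₂ : ∀ z ∈ s, |deriv (deriv X) z| ≤ C₂) {t : ℝ} (ht : 0 ≤ t) {x y : ℝ}
    (hx : x ∈ s) (hy : y ∈ s) :
    |F t y - F t x - (y - x) * exp (∫ τ in 0..t, deriv X (F τ x))| ≤
      gronwallBound 0 C₁ (C₂ * exp (C₁ * t) ^ 2) t * |y - x| ^ 2 := by
  have hXd : Differentiable ℝ X := hX.differentiable two_ne_zero
  have hX' : ContDiff ℝ 1 (deriv X) := hX.deriv'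
  have hC₁ : 0 ≤ C₁ := (abs_nonneg _).trans (hX₁ x hx)
  set ψ : ℝ → ℝ := fun r => exp (∫ τ in 0..r, deriv X (F τ x)) with hψ_def
  have hφ : Continuous fun τ => deriv X (F τ x) := hX'.continuous.comp (hF.continuous_orbit hx)
  have hψ : ∀ r, HasDerivAt ψ (deriv X (F r x) * ψ r) r := fun r =>
    (hφ.integral_hasStrictDerivAt 0 r).hasDerivAt.exp.congr_deriv (mul_comm _ _)
  have hψc : Continuous ψ := continuous_iff_continuousAt.2 fun r => (hψ r).continuousAt
  have hlin : ∀ τ ∈ Ico 0 t,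
      ‖X (F τ y) - X (F τ x) - (y - x) * (deriv X (F τ x) * ψ τ)‖ ≤
        C₁ * ‖F τ y - F τ x - (y - x) * ψ τ‖ + C₂ * exp (C₁ * t) ^ 2 * |y - x| ^ 2 := by
    rintro τ ⟨hτ₀, hτt⟩
    have hu := hF.mapsTo τ hx
    have hv := hF.mapsTo τ hy
    have hsep : |F τ y - F τ x| ≤ |y - x| * exp (C₁ * t) :=
      (hF.abs_sub_le (fun u hu v hv => hs.abs_sub_le_of_abs_deriv_le (fun z _ => hXd z) hX₁ hu hv)
        hτ₀ hx hy).trans (by gcongr)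
    have htaylor := hs.abs_sub_sub_deriv_mul_le hXd hX'.differentiable_one hX₂ hu hv
    calc ‖X (F τ y) - X (F τ x) - (y - x) * (deriv X (F τ x) * ψ τ)‖
        = |(X (F τ y) - X (F τ x) - deriv X (F τ x) * (F τ y - F τ x))
            + deriv X (F τ x) * (F τ y - F τ x - (y - x) * ψ τ)| := by
          rw [Real.norm_eq_abs]; ring_nf
      _ ≤ C₂ * |F τ y - F τ x| ^ 2 + C₁ * |F τ y - F τ x - (y - x) * ψ τ| := by
          refine (abs_add_le _ _).trans (add_le_add htaylor ?_)
          rw [abs_mul]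
          exact mul_le_mul_of_nonneg_right (hX₁ _ hu) (abs_nonneg _)
      _ ≤ C₂ * (|y - x| * exp (C₁ * t)) ^ 2 + C₁ * |F τ y - F τ x - (y - x) * ψ τ| := by
          have hC₂ : 0 ≤ C₂ := (abs_nonneg _).trans (hX₂ x hx)
          gcongr
      _ = _ := by rw [Real.norm_eq_abs]; ring
  have := norm_le_gronwallBound_of_norm_deriv_right_le
    (f := fun τ => F τ y - F τ x - (y - x) * ψ τ)
    (f' := fun τ => X (F τ y) - X (F τ x) - (y - x) * (deriv X (F τ x) * ψ τ))
    (δ := 0) (a := 0) (b := t)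
    (((hF.continuous_orbit hy).sub (hF.continuous_orbit hx)).sub
      (continuous_const.mul hψc)).continuousOn
    (fun τ _ => (((hF.hasDerivAt y hy τ).sub (hF.hasDerivAt x hx τ)).sub
      ((hψ τ).const_mul (y - x))).hasDerivWithinAt)
    (by simp [hF.map_zero x hx, hF.map_zero y hy, hψ_def]) hlin t ⟨ht, le_rfl⟩
  simpa only [Real.norm_eq_abs, sub_zero, gronwallBound_δ0_mul] using this

theorem IsFlowOn.hasDerivWithinAt_exp_integral {C₁ C₂ : ℝ} (hF : IsFlowOn X s F)
    (hs : Convex ℝ s) (hX : ContDiff ℝ 2 X) (hX₁ : ∀ z ∈ s, |deriv X z| ≤ C₁)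
    (hX₂ : ∀ z ∈ s, |deriv (deriv X) z| ≤ C₂) {t : ℝ} (ht : 0 ≤ t) {x : ℝ} (hx : x ∈ s) :
    HasDerivWithinAt (F t) (exp (∫ τ in 0..t, deriv X (F τ x))) s x :=
  hasDerivWithinAt_of_abs_sub_sub_le_sq fun _ hy =>
    hF.abs_sub_sub_mul_exp_integral_le hs hX hX₁ hX₂ ht hx hy

theorem IsFlowOn.abs_integral_deriv_sub_le {C₁ C₂ : ℝ} (hF : IsFlowOn X s F)
    (hs : Convex ℝ s) (hX : ContDiff ℝ 2 X) (hX₁ : ∀ z ∈ s, |deriv X z| ≤ C₁)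
    (hX₂ : ∀ z ∈ s, |deriv (deriv X) z| ≤ C₂) (hC₁ : C₁ ≠ 0) {t : ℝ} (ht : 0 ≤ t) {x y : ℝ}
    (hx : x ∈ s) (hy : y ∈ s) :
    |(∫ τ in 0..t, deriv X (F τ y)) - ∫ τ in 0..t, deriv X (F τ x)| ≤
      C₂ / C₁ * (exp (C₁ * t) - 1) * |y - x| := by
  have hX' : ContDiff ℝ 1 (deriv X) := hX.deriv'
  have hC₂ : 0 ≤ C₂ := (abs_nonneg _).trans (hX₂ x hx)
  have hφ : ∀ z ∈ s, Continuous fun τ => deriv X (F τ z) := fun z hz =>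
    hX'.continuous.comp (hF.continuous_orbit hz)
  have hbound : ∀ τ ∈ Ioc 0 t,
      ‖deriv X (F τ y) - deriv X (F τ x)‖ ≤ C₂ * |y - x| * exp (C₁ * τ) := by
    intro τ hτ
    calc ‖deriv X (F τ y) - deriv X (F τ x)‖ ≤ C₂ * |F τ y - F τ x| :=
          hs.abs_sub_le_of_abs_deriv_le (fun z _ => hX'.differentiable_one z) hX₂
            (hF.mapsTo τ hx) (hF.mapsTo τ hy)
      _ ≤ C₂ * (|y - x| * exp (C₁ * τ)) := by
          gcongr
          exact hF.abs_sub_le (fun u hu v hv => hs.abs_sub_le_of_abs_deriv_le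
            (fun z _ => hX.differentiable two_ne_zero z) hX₁ hu hv) hτ.1.le hx hy
      _ = C₂ * |y - x| * exp (C₁ * τ) := by ring
  rw [← integral_sub ((hφ y hy).intervalIntegrable 0 t) ((hφ x hx).intervalIntegrable 0 t)]
  calc |∫ τ in 0..t, deriv X (F τ y) - deriv X (F τ x)|
      ≤ ∫ τ in 0..t, C₂ * |y - x| * exp (C₁ * τ) :=
        norm_integral_le_of_norm_le ht (.of_forall hbound)
          ((by fun_prop : Continuous _).intervalIntegrable 0 t)
    _ = C₂ / C₁ * (exp (C₁ * t) - 1) * |y - x| := by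
        rw [integral_const_mul, integral_comp_mul_left (fun τ => exp τ) hC₁, integral_exp,
          mul_zero, exp_zero, smul_eq_mul]
        field_simp

end Flow

theorem pixton_tsuboi_estimate_general
    (a : ℝ) (ha : 0 < a)
    (X : ℝ → ℝ) (hX : ContDiff ℝ 2 X)
    (C₁ C₂ : ℝ)
    (hC₁ : C₁ = sSup ((fun x => |deriv X x|) '' Set.Icc 0 a))
    (hC₂ : C₂ = sSup ((fun x => |deriv (deriv X) x|) '' Set.Icc 0 a))
    (hC₁pos : 0 < C₁)
    (F DF : ℝ → ℝ → ℝ)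
    (hF0 : ∀ x : ℝ, F 0 x = x)
    (hFmaps : ∀ t : ℝ, ∀ x ∈ Set.Icc 0 a, F t x ∈ Set.Icc 0 a)
    (hFt : ∀ x ∈ Set.Icc 0 a, ∀ t : ℝ, HasDerivAt (fun s => F s x) (X (F t x)) t)
    (hDF : ∀ t : ℝ, ∀ x ∈ Set.Icc 0 a, HasDerivAt (fun y => F t y) (DF t x) x) :
    ∀ t : ℝ, 0 ≤ t → ∀ x ∈ Set.Icc 0 a, ∀ y ∈ Set.Icc 0 a,
      |Real.log (DF t y) - Real.log (DF t x)| ≤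
        C₂ / C₁ * (Real.exp (C₁ * t) - 1) * |y - x| := by
  intro t ht x hx y hy
  have hF : IsFlowOn X (Icc 0 a) F := ⟨fun x _ => hF0 x, fun t _ hx => hFmaps t _ hx, hFt⟩
  have hX₁ : ∀ z ∈ Icc 0 a, |deriv X z| ≤ C₁ := fun z hz =>
    hC₁ ▸ abs_le_sSup_abs_image isCompact_Icc (hX.continuous_deriv one_le_two).continuousOn hz
  have hX₂ : ∀ z ∈ Icc 0 a, |deriv (deriv X) z| ≤ C₂ := fun z hz =>
    hC₂ ▸ abs_le_sSup_abs_image isCompact_Icc (hX.deriv'.continuous_deriv le_rfl).continuousOn hz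
  have hlog : ∀ z ∈ Icc 0 a, log (DF t z) = ∫ τ in 0..t, deriv X (F τ z) := fun z hz => by
    rw [(uniqueDiffOn_Icc ha z hz).eq_deriv _ (hDF t z hz).hasDerivWithinAt
      (hF.hasDerivWithinAt_exp_integral (convex_Icc 0 a) hX hX₁ hX₂ ht hz), log_exp]
  rw [hlog y hy, hlog x hx]
  exact hF.abs_integral_deriv_sub_le (convex_Icc 0 a) hX hX₁ hX₂ hC₁pos.ne' ht hx hy

/-- **Pixton–Tsuboi estimate (Lemma 2 of the paper).**
Let `X` be a `C²` vector field on `[0,a]` vanishing at the endpoints, with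
`C₁ = sup |X'|`, `C₂ = sup |X''|` on `[0,a]`, `C₁ > 0`.  If `F` is a flow of `X`
on `[0,a]`, with spatial derivative `DF` (positive) and second spatial derivative `D2F`,
then for `t ≥ 0` the map `x ↦ log DF t x` is Lipschitz on `[0,a]` with constant
`(C₂/C₁) (e^{C₁ t} - 1)`. -/
theorem pixton_tsuboi_estimate
    (a : ℝ) (ha : 0 < a)
    (X : ℝ → ℝ) (hX : ContDiff ℝ 2 X)
    (hX0 : X 0 = 0) (hXa : X a = 0)
    (C₁ C₂ : ℝ)
    (hC₁ : C₁ = sSup ((fun x => |deriv X x|) '' Set.Icc 0 a))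
    (hC₂ : C₂ = sSup ((fun x => |deriv (deriv X) x|) '' Set.Icc 0 a))
    (hC₁pos : 0 < C₁)
    (F DF D2F : ℝ → ℝ → ℝ)
    (hF0 : ∀ x : ℝ, F 0 x = x)
    (hFmaps : ∀ t : ℝ, ∀ x ∈ Set.Icc 0 a, F t x ∈ Set.Icc 0 a)
    (hFt : ∀ x ∈ Set.Icc 0 a, ∀ t : ℝ, HasDerivAt (fun s => F s x) (X (F t x)) t)
    (hDF : ∀ t : ℝ, ∀ x ∈ Set.Icc 0 a, HasDerivAt (fun y => F t y) (DF t x) x)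
    (hDFpos : ∀ t : ℝ, ∀ x ∈ Set.Icc 0 a, 0 < DF t x)
    (hD2F : ∀ t : ℝ, ∀ x ∈ Set.Icc 0 a, HasDerivAt (fun y => DF t y) (D2F t x) x) :
    ∀ t : ℝ, 0 ≤ t → ∀ x ∈ Set.Icc 0 a, ∀ y ∈ Set.Icc 0 a,
      |Real.log (DF t y) - Real.log (DF t x)| ≤
        C₂ / C₁ * (Real.exp (C₁ * t) - 1) * |y - x| :=
  pixton_tsuboi_estimate_general a ha X hX C₁ C₂ hC₁ hC₂ hC₁pos F DF hF0 hFmaps hFt hDF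
end

section
/- Let f be a C¹ diffeomorphism of [0,1] onto itself with positive derivative such that f(x) > x for all x ∈ (0,1), and suppose var(log Df) ≤ V. Fix x₀ ∈ (0,1), let I := [x₀, f(x₀)], and let h be a C¹ diffeomorphism of [0,1] with positive derivative such that for some z ∈ I one has h(z) ∈ I and Dh(z) > e^{2V}. Then for every K ≥ 0, the conjugate f^K ∘ h ∘ f^{−K} satisfies log D(f^K ∘ h ∘ f^{−K})(f^K(z)) > V; in particular D(f^K ∘ h ∘ f^{−K})(f^K(z)) > e^V. -/
open Set Finset

private lemma hasDerivAt_iterate_aux (f : ℝ → ℝ) (hf : Differentiable ℝ f) (n : ℕ) (x : ℝ) :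
    HasDerivAt (f^[n]) (∏ i ∈ Finset.range n, deriv f (f^[i] x)) x := by
  induction n with
  | zero => simpa using hasDerivAt_id x
  | succ n ih =>
    have h1 : HasDerivAt f (deriv f (f^[n] x)) (f^[n] x) := (hf _).hasDerivAt
    have h2 := h1.comp x ih
    rw [← Function.iterate_succ' f n] at h2
    rw [Finset.prod_range_succ]
    simpa [mul_comm] using h2

private lemma var_chain_aux (g : ℝ → ℝ) (c : ℕ → ℝ) (hc : Monotone c) (n : ℕ) :
    ∑ i ∈ Finset.range n, eVariationOn g (Set.Icc (c i) (c (i + 1))) ≤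
      eVariationOn g (Set.Icc (c 0) (c n)) := by
  induction n with
  | zero => simp
  | succ n ih =>
    have key := eVariationOn.Icc_add_Icc g (s := Set.univ) (hc (Nat.zero_le n))
      (hc n.le_succ) (Set.mem_univ (c n))
    simp only [Set.univ_inter] at key
    rw [Finset.sum_range_succ, ← key]
    exact add_le_add ih le_rfl

/-- **Kopell-type estimate for conjugates:** let `f` be a `C¹` diffeomorphism of `[0,1]`
with positive derivative, `f(x) > x` on `(0,1)`, `var(log Df) ≤ V`, with inverse `finv`.
If `h` is a `C¹` diffeomorphism of `[0,1]` with positive derivative and `z, h(z)` both lie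
in the fundamental domain `I = [x₀, f(x₀)]` with `Dh(z) > e^{2V}`, then for every `K ≥ 0`,
`log D(f^K ∘ h ∘ f^{-K})(f^K(z)) > V`; in particular
`D(f^K ∘ h ∘ f^{-K})(f^K(z)) > e^V`. -/
theorem conjugate_deriv_large
    (f finv h : ℝ → ℝ) (V : ℝ) (hV : 0 ≤ V)
    (hf : ContDiff ℝ 1 f)
    (hfb : Set.BijOn f (Set.Icc 0 1) (Set.Icc 0 1))
    (hf' : ∀ x ∈ Set.Icc (0:ℝ) 1, 0 < deriv f x)
    (hfx : ∀ x ∈ Set.Ioo (0:ℝ) 1, x < f x)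
    (hfinv : ContDiff ℝ 1 finv)
    (hinvl : ∀ x ∈ Set.Icc (0:ℝ) 1, finv (f x) = x)
    (hinvr : ∀ x ∈ Set.Icc (0:ℝ) 1, f (finv x) = x)
    (hvar : eVariationOn (fun x => Real.log (deriv f x)) (Set.Icc 0 1) ≤ ENNReal.ofReal V)
    (x₀ : ℝ) (hx₀ : x₀ ∈ Set.Ioo (0:ℝ) 1)
    (hh : ContDiff ℝ 1 h)
    (hhb : Set.BijOn h (Set.Icc 0 1) (Set.Icc 0 1))
    (hh' : ∀ x ∈ Set.Icc (0:ℝ) 1, 0 < deriv h x)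
    (z : ℝ) (hz : z ∈ Set.Icc x₀ (f x₀)) (hhz : h z ∈ Set.Icc x₀ (f x₀))
    (hDh : Real.exp (2 * V) < deriv h z)
    (K : ℕ) :
    V < Real.log (deriv (f^[K] ∘ h ∘ finv^[K]) (f^[K] z)) ∧
      Real.exp V < deriv (f^[K] ∘ h ∘ finv^[K]) (f^[K] z) := by
  set g : ℝ → ℝ := fun x => Real.log (deriv f x) with hg
  have hfd : Differentiable ℝ f := hf.differentiable one_ne_zero
  have hinvd : Differentiable ℝ finv := hfinv.differentiable one_ne_zero
  have hhd : Differentiable ℝ h := hh.differentiable one_ne_zero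
  -- strict monotonicity of f on [0,1]
  have hmono : StrictMonoOn f (Set.Icc 0 1) := by
    apply strictMonoOn_of_deriv_pos (convex_Icc 0 1) hf.continuous.continuousOn
    intro x hx
    rw [interior_Icc] at hx
    exact hf' x (Set.Ioo_subset_Icc_self hx)
  have h0I : (0:ℝ) ∈ Set.Icc (0:ℝ) 1 := by norm_num
  have h1I : (1:ℝ) ∈ Set.Icc (0:ℝ) 1 := by norm_num
  have hf0 : f 0 = 0 := by
    obtain ⟨x, hxI, hfx0⟩ := hfb.surjOn h0I
    have h1 : f 0 ≤ f x := hmono.monotoneOn h0I hxI hxI.1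
    have h2 : (0:ℝ) ≤ f 0 := (hfb.mapsTo h0I).1
    rw [hfx0] at h1; linarith
  have hf1 : f 1 = 1 := by
    obtain ⟨x, hxI, hfx1⟩ := hfb.surjOn h1I
    have h1 : f x ≤ f 1 := hmono.monotoneOn hxI h1I hxI.2
    have h2 : f 1 ≤ 1 := (hfb.mapsTo h1I).2
    rw [hfx1] at h1; linarith
  have hIoo : ∀ x ∈ Set.Ioo (0:ℝ) 1, f x ∈ Set.Ioo (0:ℝ) 1 := by
    intro x hx
    constructor
    · rw [← hf0]; exact hmono h0I (Set.Ioo_subset_Icc_self hx) hx.1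
    · rw [← hf1]; exact hmono (Set.Ioo_subset_Icc_self hx) h1I hx.2
  have hIcc : ∀ x ∈ Set.Icc (0:ℝ) 1, f x ∈ Set.Icc (0:ℝ) 1 := hfb.mapsTo
  have hiterIcc : ∀ n, ∀ x ∈ Set.Icc (0:ℝ) 1, f^[n] x ∈ Set.Icc (0:ℝ) 1 := by
    intro n
    induction n with
    | zero => simpa using fun x hx => hx
    | succ n ih =>
      intro x hx
      rw [Function.iterate_succ_apply]
      exact ih _ (hIcc x hx)
  have hiterMono : ∀ n, ∀ x ∈ Set.Icc (0:ℝ) 1, ∀ y ∈ Set.Icc (0:ℝ) 1, x ≤ y →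
      f^[n] x ≤ f^[n] y := by
    intro n
    induction n with
    | zero => simp
    | succ n ih =>
      intro x hx y hy hxy
      rw [Function.iterate_succ_apply, Function.iterate_succ_apply]
      exact ih _ (hIcc x hx) _ (hIcc y hy) (hmono.monotoneOn hx hy hxy)
  have hinvIter : ∀ n, ∀ x ∈ Set.Icc (0:ℝ) 1, finv^[n] (f^[n] x) = x := by
    intro n
    induction n with
    | zero => simp
    | succ n ih =>
      intro x hx
      rw [Function.iterate_succ_apply' f, Function.iterate_succ_apply finv]
      rw [hinvl _ (hiterIcc n x hx)]
      exact ih x hx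
  -- basic membership facts
  have hx₀I : x₀ ∈ Set.Icc (0:ℝ) 1 := Set.Ioo_subset_Icc_self hx₀
  have hfx₀o : f x₀ ∈ Set.Ioo (0:ℝ) 1 := hIoo x₀ hx₀
  have hfx₀I : f x₀ ∈ Set.Icc (0:ℝ) 1 := Set.Ioo_subset_Icc_self hfx₀o
  have hzo : z ∈ Set.Ioo (0:ℝ) 1 := ⟨lt_of_lt_of_le hx₀.1 hz.1, lt_of_le_of_lt hz.2 hfx₀o.2⟩
  have hzI : z ∈ Set.Icc (0:ℝ) 1 := Set.Ioo_subset_Icc_self hzo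
  have hhzI : h z ∈ Set.Icc (0:ℝ) 1 :=
    Set.Ioo_subset_Icc_self ⟨lt_of_lt_of_le hx₀.1 hhz.1, lt_of_le_of_lt hhz.2 hfx₀o.2⟩
  -- fundamental domains
  set c : ℕ → ℝ := fun i => f^[i] x₀ with hc
  have hx₀le : x₀ ≤ f x₀ := le_of_lt (hfx x₀ hx₀)
  have hcmono : Monotone c := by
    apply monotone_nat_of_le_succ
    intro n
    show f^[n] x₀ ≤ f^[n+1] x₀
    rw [Function.iterate_succ_apply]
    exact hiterMono n _ hx₀I _ hfx₀I hx₀le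
  have hcI : ∀ n, c n ∈ Set.Icc (0:ℝ) 1 := fun n => hiterIcc n x₀ hx₀I
  have hmemz : ∀ i, f^[i] z ∈ Set.Icc (c i) (c (i + 1)) := by
    intro i
    constructor
    · exact hiterMono i _ hx₀I _ hzI hz.1
    · show f^[i] z ≤ f^[i+1] x₀
      rw [Function.iterate_succ_apply]
      exact hiterMono i _ hzI _ hfx₀I hz.2
  have hmemhz : ∀ i, f^[i] (h z) ∈ Set.Icc (c i) (c (i + 1)) := by
    intro i
    constructor
    · exact hiterMono i _ hx₀I _ hhzI hhz.1
    · show f^[i] (h z) ≤ f^[i+1] x₀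
      rw [Function.iterate_succ_apply]
      exact hiterMono i _ hhzI _ hfx₀I hhz.2
  have horbz : ∀ i, f^[i] z ∈ Set.Icc (0:ℝ) 1 := fun i => hiterIcc i z hzI
  have horbhz : ∀ i, f^[i] (h z) ∈ Set.Icc (0:ℝ) 1 := fun i => hiterIcc i _ hhzI
  -- variation bound
  have hsum : ∑ i ∈ Finset.range K, |g (f^[i] (h z)) - g (f^[i] z)| ≤ V := by
    have h1 : ∑ i ∈ Finset.range K, edist (g (f^[i] z)) (g (f^[i] (h z))) ≤
        ENNReal.ofReal V := by
      calc ∑ i ∈ Finset.range K, edist (g (f^[i] z)) (g (f^[i] (h z)))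
          ≤ ∑ i ∈ Finset.range K, eVariationOn g (Set.Icc (c i) (c (i + 1))) := by
            apply Finset.sum_le_sum
            intro i _
            exact eVariationOn.edist_le g (hmemz i) (hmemhz i)
        _ ≤ eVariationOn g (Set.Icc (c 0) (c K)) := var_chain_aux g c hcmono K
        _ ≤ eVariationOn g (Set.Icc 0 1) :=
            eVariationOn.mono g (Set.Icc_subset_Icc (hcI 0).1 (hcI K).2)
        _ ≤ ENNReal.ofReal V := hvar
    have h2 : ∀ i ∈ Finset.range K,
        edist (g (f^[i] z)) (g (f^[i] (h z))) =
          ENNReal.ofReal |g (f^[i] (h z)) - g (f^[i] z)| := by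
      intro i _
      rw [edist_dist, Real.dist_eq, abs_sub_comm]
    rw [Finset.sum_congr rfl h2, ← ENNReal.ofReal_sum_of_nonneg
      (fun i _ => abs_nonneg _)] at h1
    exact (ENNReal.ofReal_le_ofReal_iff hV).mp h1
  -- derivatives
  set A : ℝ := ∏ i ∈ Finset.range K, deriv f (f^[i] (h z)) with hA
  set A' : ℝ := ∏ i ∈ Finset.range K, deriv f (f^[i] z) with hA'
  set B : ℝ := deriv h z with hB
  have hAp : 0 < A := Finset.prod_pos fun i _ => hf' _ (horbhz i)
  have hA'p : 0 < A' := Finset.prod_pos fun i _ => hf' _ (horbz i)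
  have hBp : 0 < B := hh' z hzI
  have hdA : HasDerivAt (f^[K]) A (h z) := hasDerivAt_iterate_aux f hfd K (h z)
  have hdA' : HasDerivAt (f^[K]) A' z := hasDerivAt_iterate_aux f hfd K z
  set w : ℝ := f^[K] z with hw
  set C : ℝ := ∏ i ∈ Finset.range K, deriv finv (finv^[i] w) with hC
  have hdC : HasDerivAt (finv^[K]) C w := hasDerivAt_iterate_aux finv hinvd K w
  have hfix : finv^[K] w = z := hinvIter K z hzI
  -- C * A' = 1
  have hCA : C * A' = 1 := by
    have hcomp : HasDerivAt (finv^[K] ∘ f^[K]) (C * A') z := hdC.comp z hdA'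
    have hev : (finv^[K] ∘ f^[K]) =ᶠ[nhds z] id := by
      filter_upwards [isOpen_Ioo.mem_nhds hzo] with x hx
      exact hinvIter K x (Set.Ioo_subset_Icc_self hx)
    have h1 : HasDerivAt (id : ℝ → ℝ) (C * A') z := hev.hasDerivAt_iff.mp hcomp
    exact h1.unique (hasDerivAt_id z)
  have hCp : 0 < C := by
    rcases lt_trichotomy C 0 with hc' | hc' | hc'
    · nlinarith
    · rw [hc'] at hCA; simp at hCA
    · exact hc'
  -- derivative of conjugate
  have hdh : HasDerivAt h B (finv^[K] w) := by rw [hfix]; exact (hhd z).hasDerivAt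
  have hdhc : HasDerivAt (h ∘ finv^[K]) (B * C) w := hdh.comp w hdC
  have hdA2 : HasDerivAt (f^[K]) A ((h ∘ finv^[K]) w) := by
    show HasDerivAt (f^[K]) A (h (finv^[K] w))
    rw [hfix]; exact hdA
  have hconj : HasDerivAt (f^[K] ∘ h ∘ finv^[K]) (A * (B * C)) w := hdA2.comp w hdhc
  have hDval : deriv (f^[K] ∘ h ∘ finv^[K]) (f^[K] z) = A * (B * C) := hconj.deriv
  have hDp : 0 < A * (B * C) := by positivity
  -- logs
  have hlogA : Real.log A = ∑ i ∈ Finset.range K, g (f^[i] (h z)) := by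
    rw [hA, Real.log_prod]
    intro i hi
    exact ne_of_gt (hf' _ (horbhz i))
  have hlogA' : Real.log A' = ∑ i ∈ Finset.range K, g (f^[i] z) := by
    rw [hA', Real.log_prod]
    intro i hi
    exact ne_of_gt (hf' _ (horbz i))
  have hlogC : Real.log C = -Real.log A' := by
    have : C = A'⁻¹ := by field_simp; linarith [hCA]
    rw [this, Real.log_inv]
  have hlogB : 2 * V < Real.log B := (Real.lt_log_iff_exp_lt hBp).mpr hDh
  have hdiff : |∑ i ∈ Finset.range K, g (f^[i] (h z)) - ∑ i ∈ Finset.range K, g (f^[i] z)|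
      ≤ V := by
    rw [← Finset.sum_sub_distrib]
    exact le_trans (Finset.abs_sum_le_sum_abs _ _) hsum
  have hlogD : Real.log (A * (B * C)) = Real.log A + Real.log B + Real.log C := by
    rw [Real.log_mul (ne_of_gt hAp) (ne_of_gt (by positivity)),
      Real.log_mul (ne_of_gt hBp) (ne_of_gt hCp)]
    ring
  have hmain : V < Real.log (A * (B * C)) := by
    rw [hlogD, hlogA, hlogC, hlogA']
    have := abs_le.mp hdiff
    linarith [this.1]
  constructor
  · rw [hDval]; exact hmain
  · rw [hDval]
    calc Real.exp V < Real.exp (Real.log (A * (B * C))) := Real.exp_lt_exp.mpr hmain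
      _ = A * (B * C) := Real.exp_log hDp
end

section
/- Let f be a C¹ diffeomorphism of [0,1] onto itself with positive derivative such that f(x) > x for all x ∈ (0,1), suppose var(log Df) ≤ V with V > 0, fix x₀ ∈ (0,1) and let I := [x₀, f(x₀)]. Let g be a C¹ diffeomorphism of [0,1] with positive derivative which equals the identity outside I, and suppose there are N ≥ 1 and z ∈ I such that the N-th iterate gᴺ satisfies gᴺ(z) ∈ I and Dgᴺ(z) > e^{2V}. Then for every K ≥ 1 there exists a point y_K ∈ f^K(I) with D(f^K ∘ g ∘ f^{−K})(y_K) ≥ e^{V/N}. -/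
/-!
Let `h = f^K ∘ g ∘ f^{-K}`. Along the orbit `w_j = f^K (g^j z)`, `j < N`, the chain rule gives
`∏ Dh(w_j) = Df^K(g^N z) · Dg^N(z) / Df^K(z)`. The points `z` and `g^N z` lie in the same
fundamental domain `I`, so their first `K` images under `f` sweep disjoint, ordered intervals,
and the distortion `|log Df^K(g^N z) - log Df^K(z)|` is bounded by `var(log Df) ≤ V`. Hence the
product is at least `e^{-V} e^{2V} = e^V`, and one of its `N` factors is at least `e^{V/N}`.
-/

open Set Function Filter Topology

section Iterates

variable {α : Type*} {f g : α → α} {s : Set α}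

theorem Set.LeftInvOn.iterate (h : LeftInvOn g f s) (hf : MapsTo f s s) (n : ℕ) :
    LeftInvOn g^[n] f^[n] s := by
  induction n with
  | zero => exact fun _ _ => rfl
  | succ n ih =>
    intro x hx
    rw [iterate_succ_apply' f, iterate_succ_apply g, h (hf.iterate n hx), ih hx]

theorem MonotoneOn.iterate_of_mapsTo [Preorder α] (hf : MonotoneOn f s) (hs : MapsTo f s s)
    (n : ℕ) : MonotoneOn f^[n] s := by
  induction n with
  | zero => exact monotone_id.monotoneOn s
  | succ n ih =>
    exact fun x hx y hy hxy => ih (hs hx) (hs hy) (hf hx hy hxy)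

theorem iterate_mem_of_iterate_mem (hg : ∀ x ∉ s, g x = x) {n j : ℕ} {z : α}
    (hz : g^[n] z ∈ s) (hj : j ≤ n) : g^[j] z ∈ s := by
  by_contra hzj
  have hfix : ∀ m, g^[m] (g^[j] z) = g^[j] z := fun m => iterate_fixed (hg _ hzj) m
  rw [← hfix (n - j), ← iterate_add_apply, Nat.sub_add_cancel hj] at hzj
  exact hzj hz

end Iterates

theorem Icc_subset_Ioo_of_strictMonoOn {f : ℝ → ℝ} {b c a : ℝ} (hf : StrictMonoOn f (Icc b c))
    (hs : MapsTo f (Icc b c) (Icc b c)) (ha : a ∈ Ioo b c) : Icc a (f a) ⊆ Ioo b c :=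
  have hc : c ∈ Icc b c := right_mem_Icc.2 (ha.1.trans ha.2).le
  Icc_subset_Ioo ha.1 ((hf (Ioo_subset_Icc_self ha) hc ha.2).trans_le (hs hc).2)

theorem Finset.exists_le_of_pow_card_le_prod {ι : Type*} {s : Finset ι} {d : ι → ℝ} {c : ℝ}
    (hs : s.Nonempty) (hd : ∀ i ∈ s, 0 < d i) (h : c ^ s.card ≤ ∏ i ∈ s, d i) :
    ∃ i ∈ s, c ≤ d i := by
  by_contra! hlt
  have := Finset.prod_lt_prod_of_nonempty hd hlt hs
  rw [Finset.prod_const] at this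
  exact this.not_ge h

theorem sum_edist_le_eVariationOn_of_interlaced {α E : Type*} [LinearOrder α]
    [PseudoEMetricSpace E] {f : α → E} {s : Set α} {a b : ℕ → α}
    (hab : ∀ j, a j ≤ b j) (hba : ∀ j, b j ≤ a (j + 1)) (ha : ∀ j, a j ∈ s) (hb : ∀ j, b j ∈ s)
    (n : ℕ) : ∑ j ∈ Finset.range n, edist (f (b j)) (f (a j)) ≤ eVariationOn f s := by
  set u : ℕ → α := fun i => if i % 2 = 0 then a (i / 2) else b (i / 2) with hu
  have hu_even : ∀ j, u (2 * j) = a j := fun j => by simp [hu]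
  have hu_odd : ∀ j, u (2 * j + 1) = b j := fun j => by
    simp only [hu]; rw [if_neg (by omega), show (2 * j + 1) / 2 = j by omega]
  have hu_mono : Monotone u := by
    refine monotone_nat_of_le_succ fun i => ?_
    obtain ⟨j, rfl | rfl⟩ := Nat.even_or_odd' i
    · rw [hu_even, hu_odd]; exact hab j
    · rw [hu_odd, show 2 * j + 1 + 1 = 2 * (j + 1) by ring, hu_even]; exact hba j
  have hu_mem : ∀ i, u i ∈ s := fun i => by
    obtain ⟨j, rfl | rfl⟩ := Nat.even_or_odd' i
    · rw [hu_even]; exact ha j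
    · rw [hu_odd]; exact hb j
  refine le_trans ?_ (eVariationOn.sum_le (f := f) (n := 2 * n) hu_mono hu_mem)
  induction n with
  | zero => simp
  | succ n ih =>
    rw [Finset.sum_range_succ, show 2 * (n + 1) = 2 * n + 1 + 1 by ring, Finset.sum_range_succ,
      Finset.sum_range_succ, hu_odd, hu_even, add_assoc]
    exact add_le_add ih le_self_add

section Derivatives

variable {𝕜 : Type*} [NontriviallyNormedField 𝕜]

theorem deriv_iterate_eq_prod {f : 𝕜 → 𝕜} (hf : Differentiable 𝕜 f) (n : ℕ) (x : 𝕜) :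
    deriv f^[n] x = ∏ j ∈ Finset.range n, deriv f (f^[j] x) := by
  induction n with
  | zero => simp
  | succ n ih =>
    rw [iterate_succ', deriv_comp x hf.differentiableAt (hf.iterate n).differentiableAt, ih,
      Finset.prod_range_succ, mul_comm]

theorem deriv_conj_apply {F G Finv : 𝕜 → 𝕜} {x : 𝕜} (hF : Differentiable 𝕜 F)
    (hG : Differentiable 𝕜 G) (hFinv : Differentiable 𝕜 Finv) (hinv : Finv ∘ F =ᶠ[𝓝 x] id) :
    deriv (F ∘ G ∘ Finv) (F x) = deriv F (G x) * deriv G x / deriv F x := by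
  have hx : Finv (F x) = x := hinv.eq_of_nhds
  have hinv_deriv : deriv Finv (F x) * deriv F x = 1 := by
    rw [← deriv_comp x hFinv.differentiableAt hF.differentiableAt, hinv.deriv_eq, deriv_id]
  rw [deriv_comp _ hF.differentiableAt (hG.comp hFinv).differentiableAt,
    deriv_comp _ hG.differentiableAt hFinv.differentiableAt, hx,
    eq_inv_of_mul_eq_one_left hinv_deriv, div_eq_mul_inv, comp_apply, hx, mul_assoc]

theorem prod_deriv_conj_orbit_mul {F G Finv : 𝕜 → 𝕜} {z : 𝕜} {n : ℕ}
    (hF : Differentiable 𝕜 F) (hG : Differentiable 𝕜 G) (hFinv : Differentiable 𝕜 Finv)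
    (hinv : ∀ j < n, Finv ∘ F =ᶠ[𝓝 (G^[j] z)] id) (hF' : ∀ j < n, deriv F (G^[j] z) ≠ 0) :
    (∏ j ∈ Finset.range n, deriv (F ∘ G ∘ Finv) (F (G^[j] z))) * deriv F z
      = deriv F (G^[n] z) * deriv G^[n] z := by
  induction n with
  | zero => simp
  | succ n ih =>
    rw [Finset.prod_range_succ, mul_right_comm,
      ih (fun j hj => hinv j (by omega)) (fun j hj => hF' j (by omega)),
      deriv_conj_apply hF hG hFinv (hinv n (by omega)), iterate_succ_apply',
      deriv_iterate_eq_prod hG, deriv_iterate_eq_prod hG, Finset.prod_range_succ]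
    field_simp [hF' n (by omega)]

end Derivatives

theorem deriv_iterate_pos {f : ℝ → ℝ} {s : Set ℝ} (hf : Differentiable ℝ f) (hs : MapsTo f s s)
    (hf' : ∀ x ∈ s, 0 < deriv f x) (n : ℕ) {x : ℝ} (hx : x ∈ s) : 0 < deriv f^[n] x := by
  rw [deriv_iterate_eq_prod hf]
  exact Finset.prod_pos fun j _ => hf' _ (hs.iterate j hx)

theorem abs_log_deriv_iterate_sub_le_eVariationOn {f : ℝ → ℝ} {s : Set ℝ}
    (hf : Differentiable ℝ f) (hs : MapsTo f s s) (hmono : MonotoneOn f s)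
    (hf' : ∀ x ∈ s, deriv f x ≠ 0) {a p q : ℝ} (ha : a ∈ s) (hp : p ∈ s) (hq : q ∈ s)
    (hpa : p ∈ Icc a (f a)) (hqa : q ∈ Icc a (f a)) (n : ℕ) :
    ENNReal.ofReal |Real.log (deriv f^[n] p) - Real.log (deriv f^[n] q)|
      ≤ eVariationOn (fun x => Real.log (deriv f x)) s := by
  wlog hqp : q ≤ p generalizing p q
  · rw [abs_sub_comm]
    exact this hq hp hqa hpa (le_of_not_ge hqp)
  have hlog : ∀ x ∈ s, Real.log (deriv f^[n] x)
      = ∑ j ∈ Finset.range n, Real.log (deriv f (f^[j] x)) := fun x hx => by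
    rw [deriv_iterate_eq_prod hf, Real.log_prod]
    exact fun j _ => hf' _ (hs.iterate j hx)
  rw [hlog p hp, hlog q hq, ← Finset.sum_sub_distrib]
  calc ENNReal.ofReal |∑ j ∈ Finset.range n,
          (Real.log (deriv f (f^[j] p)) - Real.log (deriv f (f^[j] q)))|
      ≤ ENNReal.ofReal (∑ j ∈ Finset.range n,
          |Real.log (deriv f (f^[j] p)) - Real.log (deriv f (f^[j] q))|) :=
        ENNReal.ofReal_le_ofReal (Finset.abs_sum_le_sum_abs _ _)
    _ = ∑ j ∈ Finset.range n,
          edist (Real.log (deriv f (f^[j] p))) (Real.log (deriv f (f^[j] q))) := by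
        rw [ENNReal.ofReal_sum_of_nonneg fun _ _ => abs_nonneg _]
        simp only [edist_dist, Real.dist_eq]
    _ ≤ _ := by
      refine sum_edist_le_eVariationOn_of_interlaced (a := fun j => f^[j] q)
        (b := fun j => f^[j] p) (fun j => hmono.iterate_of_mapsTo hs j hq hp hqp) (fun j => ?_)
        (fun j => hs.iterate j hq) (fun j => hs.iterate j hp) n
      -- `p ≤ f a ≤ f q`, so the segments `[f^j q, f^j p]` are disjoint and ordered
      rw [iterate_succ_apply]
      exact hmono.iterate_of_mapsTo hs j hp (hs hq) (hpa.2.trans (hmono ha hq hqa.1))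

theorem exists_le_deriv_conj_orbit_of_pow_le {F G Finv : ℝ → ℝ} {U : Set ℝ} {z c : ℝ} {n : ℕ}
    (hF : Differentiable ℝ F) (hG : Differentiable ℝ G) (hFinv : Differentiable ℝ Finv)
    (hU : IsOpen U) (hinv : LeftInvOn Finv F U) (hF' : ∀ x ∈ U, 0 < deriv F x)
    (hG' : ∀ x ∈ U, 0 < deriv G x) (horbit : ∀ j ≤ n, G^[j] z ∈ U) (hn : n ≠ 0)
    (hc : c ^ n ≤ deriv F (G^[n] z) * deriv G^[n] z / deriv F z) :
    ∃ j < n, c ≤ deriv (F ∘ G ∘ Finv) (F (G^[j] z)) := by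
  have hinv_nhds : ∀ j < n, Finv ∘ F =ᶠ[𝓝 (G^[j] z)] id := fun j hj =>
    hinv.eqOn.eventuallyEq_of_mem (hU.mem_nhds (horbit j hj.le))
  have hpos : ∀ j ∈ Finset.range n, 0 < deriv (F ∘ G ∘ Finv) (F (G^[j] z)) := by
    intro j hj
    have hj := Finset.mem_range.1 hj
    rw [deriv_conj_apply hF hG hFinv (hinv_nhds j hj), ← iterate_succ_apply' G]
    exact div_pos (mul_pos (hF' _ (horbit _ hj)) (hG' _ (horbit j hj.le)))
      (hF' _ (horbit j hj.le))
  rw [← prod_deriv_conj_orbit_mul hF hG hFinv hinv_nhds fun j hj => (hF' _ (horbit j hj.le)).ne',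
    mul_div_cancel_right₀ _ (hF' z (horbit 0 n.zero_le)).ne'] at hc
  obtain ⟨j, hj, hle⟩ := Finset.exists_le_of_pow_card_le_prod (Finset.nonempty_range_iff.2 hn)
    hpos (by rwa [Finset.card_range])
  exact ⟨j, Finset.mem_range.1 hj, hle⟩

theorem conjugate_has_point_of_large_deriv_general
    (f finv g : ℝ → ℝ) (V : ℝ) (hV : 0 < V)
    (hf : ContDiff ℝ 1 f)
    (hfb : Set.BijOn f (Set.Icc 0 1) (Set.Icc 0 1))
    (hf' : ∀ x ∈ Set.Icc (0:ℝ) 1, 0 < deriv f x)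
    (hfinv : ContDiff ℝ 1 finv)
    (hinvl : ∀ x ∈ Set.Icc (0:ℝ) 1, finv (f x) = x)
    (hvar : eVariationOn (fun x => Real.log (deriv f x)) (Set.Icc 0 1) ≤ ENNReal.ofReal V)
    (x₀ : ℝ) (hx₀ : x₀ ∈ Set.Ioo (0:ℝ) 1)
    (hg : ContDiff ℝ 1 g)
    (hg' : ∀ x ∈ Set.Icc (0:ℝ) 1, 0 < deriv g x)
    (hgid : ∀ x : ℝ, x ∉ Set.Icc x₀ (f x₀) → g x = x)
    (N : ℕ) (hN : 1 ≤ N) (z : ℝ) (hz : z ∈ Set.Icc x₀ (f x₀))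
    (hgz : g^[N] z ∈ Set.Icc x₀ (f x₀))
    (hDg : Real.exp (2 * V) < deriv (g^[N]) z)
    (K : ℕ) :
    ∃ y ∈ f^[K] '' Set.Icc x₀ (f x₀),
      Real.exp (V / N) ≤ deriv (f^[K] ∘ g ∘ finv^[K]) y := by
  have hfd := hf.differentiable one_ne_zero
  have hmono : StrictMonoOn f (Icc 0 1) := strictMonoOn_of_deriv_pos (convex_Icc 0 1)
    hfd.continuous.continuousOn fun x hx => hf' x (interior_subset hx)
  have horbit : ∀ j ≤ N, g^[j] z ∈ Icc x₀ (f x₀) := fun j hj =>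
    iterate_mem_of_iterate_mem hgid hgz hj
  have hI : Icc x₀ (f x₀) ⊆ Ioo 0 1 := Icc_subset_Ioo_of_strictMonoOn hmono hfb.mapsTo hx₀
  have hI' : Icc x₀ (f x₀) ⊆ Icc 0 1 := hI.trans Ioo_subset_Icc_self
  have hfK' : ∀ x ∈ Icc 0 1, 0 < deriv f^[K] x := fun _ hx =>
    deriv_iterate_pos hfd hfb.mapsTo hf' K hx
  have hdist : |Real.log (deriv f^[K] (g^[N] z)) - Real.log (deriv f^[K] z)| ≤ V :=
    (ENNReal.ofReal_le_ofReal_iff hV.le).1 <| (abs_log_deriv_iterate_sub_le_eVariationOn hfd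
      hfb.mapsTo hmono.monotoneOn (fun x hx => (hf' x hx).ne') (Ioo_subset_Icc_self hx₀)
      (hI' hgz) (hI' hz) hgz hz K).trans hvar
  have hDg_pos : 0 < deriv g^[N] z := (Real.exp_pos _).trans hDg
  have hz' := hfK' z (hI' hz)
  have hgz' := hfK' _ (hI' hgz)
  have hpow : Real.exp (V / N) ^ N ≤ deriv f^[K] (g^[N] z) * deriv g^[N] z / deriv f^[K] z := by
    rw [← Real.exp_nat_mul, mul_div_cancel₀ _ (by positivity), ← Real.le_log_iff_exp_le
      (by positivity), Real.log_div (by positivity) hz'.ne', Real.log_mul hgz'.ne' hDg_pos.ne']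
    linarith [(abs_le.1 hdist).1, (Real.lt_log_iff_exp_lt hDg_pos).2 hDg]
  obtain ⟨j, hj, hle⟩ := exists_le_deriv_conj_orbit_of_pow_le (hfd.iterate K)
    (hg.differentiable one_ne_zero) ((hfinv.differentiable one_ne_zero).iterate K) isOpen_Ioo
    ((show LeftInvOn finv f (Icc 0 1) from hinvl).iterate hfb.mapsTo K |>.mono Ioo_subset_Icc_self)
    (fun x hx => hfK' x (Ioo_subset_Icc_self hx)) (fun x hx => hg' x (Ioo_subset_Icc_self hx))
    (fun j hj => hI (horbit j hj)) (by omega) hpow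
  exact ⟨_, mem_image_of_mem _ (horbit j hj.le), hle⟩

/-- **Existence of points of large derivative for conjugates:** with `f` a `C¹`
diffeomorphism of `[0,1]` with positive derivative, `f(x) > x` on `(0,1)`,
`var(log Df) ≤ V`, `V > 0`, inverse `finv`, and `g` a `C¹` diffeomorphism of `[0,1]`
with positive derivative, identity outside `I = [x₀, f(x₀)]`, such that for some `N ≥ 1`
and `z ∈ I` one has `gᴺ(z) ∈ I` and `Dgᴺ(z) > e^{2V}`: for every `K ≥ 1` there exists
`y ∈ f^K(I)` with `D(f^K ∘ g ∘ f^{-K})(y) ≥ e^{V/N}`. -/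
theorem conjugate_has_point_of_large_deriv
    (f finv g : ℝ → ℝ) (V : ℝ) (hV : 0 < V)
    (hf : ContDiff ℝ 1 f)
    (hfb : Set.BijOn f (Set.Icc 0 1) (Set.Icc 0 1))
    (hf' : ∀ x ∈ Set.Icc (0:ℝ) 1, 0 < deriv f x)
    (hfx : ∀ x ∈ Set.Ioo (0:ℝ) 1, x < f x)
    (hfinv : ContDiff ℝ 1 finv)
    (hinvl : ∀ x ∈ Set.Icc (0:ℝ) 1, finv (f x) = x)
    (hinvr : ∀ x ∈ Set.Icc (0:ℝ) 1, f (finv x) = x)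
    (hvar : eVariationOn (fun x => Real.log (deriv f x)) (Set.Icc 0 1) ≤ ENNReal.ofReal V)
    (x₀ : ℝ) (hx₀ : x₀ ∈ Set.Ioo (0:ℝ) 1)
    (hg : ContDiff ℝ 1 g)
    (hgb : Set.BijOn g (Set.Icc 0 1) (Set.Icc 0 1))
    (hg' : ∀ x ∈ Set.Icc (0:ℝ) 1, 0 < deriv g x)
    (hgid : ∀ x : ℝ, x ∉ Set.Icc x₀ (f x₀) → g x = x)
    (N : ℕ) (hN : 1 ≤ N) (z : ℝ) (hz : z ∈ Set.Icc x₀ (f x₀))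
    (hgz : g^[N] z ∈ Set.Icc x₀ (f x₀))
    (hDg : Real.exp (2 * V) < deriv (g^[N]) z)
    (K : ℕ) (hK : 1 ≤ K) :
    ∃ y ∈ f^[K] '' Set.Icc x₀ (f x₀),
      Real.exp (V / N) ≤ deriv (f^[K] ∘ g ∘ finv^[K]) y :=
  conjugate_has_point_of_large_deriv_general f finv g V hV hf hfb hf' hfinv hinvl hvar x₀ hx₀ hg hg'
    hgid N hN z hz hgz hDg K
end

section
/- Let f be a C¹ diffeomorphism of [0,1] onto itself with positive derivative such that f(x) > x for all x ∈ (0,1), let x₀ ∈ (0,1), and let g be a C¹ diffeomorphism of [0,1] with positive derivative which equals the identity outside the open interval (x₀, f(x₀)). Then for every n ≥ 1 the map Φ_n := (f∘g)ⁿ ∘ f^{−n} (where f^{−n} is the n-th iterate of the inverse of f) satisfies: Φ_n(x) = f^k(g(f^{−k}(x))) for every x ∈ f^k([x₀, f(x₀)]) with 1 ≤ k ≤ n, and Φ_n(x) = x for every x outside the union ⋃_{k=1}^{n} f^k([x₀, f(x₀)]). -/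
/-- **Structure of `(fg)ⁿ f^{-n}`:** let `f` be a `C¹` diffeomorphism of `[0,1]` with
positive derivative and `f(x) > x` on `(0,1)`, with inverse `finv`, and let `g` be a `C¹`
diffeomorphism of `[0,1]` with positive derivative which is the identity outside the
open interval `(x₀, f(x₀))`.  Then `Φₙ := (f∘g)ⁿ ∘ f^{-n}` equals `f^k ∘ g ∘ f^{-k}` on
`f^k([x₀, f(x₀)])` for `1 ≤ k ≤ n`, and equals the identity on the rest of `[0,1]`. -/
theorem fg_pow_comp_finv_pow_structure
    (f finv g : ℝ → ℝ)
    (hf : ContDiff ℝ 1 f)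
    (hfb : Set.BijOn f (Set.Icc 0 1) (Set.Icc 0 1))
    (hf' : ∀ x ∈ Set.Icc (0:ℝ) 1, 0 < deriv f x)
    (hfx : ∀ x ∈ Set.Ioo (0:ℝ) 1, x < f x)
    (hinvl : ∀ x ∈ Set.Icc (0:ℝ) 1, finv (f x) = x)
    (hinvr : ∀ x ∈ Set.Icc (0:ℝ) 1, f (finv x) = x)
    (x₀ : ℝ) (hx₀ : x₀ ∈ Set.Ioo (0:ℝ) 1)
    (hg : ContDiff ℝ 1 g)
    (hgb : Set.BijOn g (Set.Icc 0 1) (Set.Icc 0 1))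
    (hg' : ∀ x ∈ Set.Icc (0:ℝ) 1, 0 < deriv g x)
    (hgid : ∀ x : ℝ, x ∉ Set.Ioo x₀ (f x₀) → g x = x)
    (n : ℕ) (hn : 1 ≤ n) :
    (∀ k : ℕ, 1 ≤ k → k ≤ n → ∀ x ∈ f^[k] '' Set.Icc x₀ (f x₀),
        ((f ∘ g)^[n] ∘ finv^[n]) x = f^[k] (g (finv^[k] x))) ∧
    (∀ x ∈ Set.Icc (0:ℝ) 1,
        (∀ k : ℕ, 1 ≤ k → k ≤ n → x ∉ f^[k] '' Set.Icc x₀ (f x₀)) →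
        ((f ∘ g)^[n] ∘ finv^[n]) x = x) := by
  clear hn
  have hfmono : StrictMonoOn f (Set.Icc 0 1) :=
    strictMonoOn_of_deriv_pos (convex_Icc 0 1) hf.continuous.continuousOn
      fun x hx => hf' x (interior_subset hx)
  have hgmono : StrictMonoOn g (Set.Icc 0 1) :=
    strictMonoOn_of_deriv_pos (convex_Icc 0 1) hg.continuous.continuousOn
      fun x hx => hg' x (interior_subset hx)
  have h0m : (0:ℝ) ∈ Set.Icc (0:ℝ) 1 := Set.left_mem_Icc.2 zero_le_one
  have h1m : (1:ℝ) ∈ Set.Icc (0:ℝ) 1 := Set.right_mem_Icc.2 zero_le_one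
  have hf0 : f 0 = 0 := by
    obtain ⟨y, hy, hfy⟩ := hfb.surjOn h0m
    rcases eq_or_lt_of_le hy.1 with h | h
    · rw [← h] at hfy; exact hfy
    · have h2 := hfmono h0m hy h
      have h3 := (hfb.mapsTo h0m).1
      rw [hfy] at h2; linarith
  have hf1 : f 1 = 1 := by
    obtain ⟨y, hy, hfy⟩ := hfb.surjOn h1m
    rcases eq_or_lt_of_le hy.2 with h | h
    · rw [h] at hfy; exact hfy
    · have h2 := hfmono hy h1m h
      have h3 := (hfb.mapsTo h1m).2
      rw [hfy] at h2; linarith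
  have hfIoo : Set.MapsTo f (Set.Ioo 0 1) (Set.Ioo 0 1) := by
    intro x hx
    constructor
    · rw [← hf0]; exact hfmono h0m (Set.Ioo_subset_Icc_self hx) hx.1
    · rw [← hf1]; exact hfmono (Set.Ioo_subset_Icc_self hx) h1m hx.2
  have hfinvmaps : Set.MapsTo finv (Set.Icc 0 1) (Set.Icc 0 1) := by
    intro y hy
    obtain ⟨x, hxm, hfy⟩ := hfb.surjOn hy
    rw [← hfy, hinvl x hxm]; exact hxm
  have hfI : ∀ k, Set.MapsTo (f^[k]) (Set.Icc 0 1) (Set.Icc 0 1) :=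
    fun k => hfb.mapsTo.iterate k
  have hvI : ∀ k, Set.MapsTo (finv^[k]) (Set.Icc 0 1) (Set.Icc 0 1) :=
    fun k => hfinvmaps.iterate k
  have hlr : ∀ k, ∀ x ∈ Set.Icc (0:ℝ) 1, finv^[k] (f^[k] x) = x := by
    intro k
    induction k with
    | zero => intro x _; simp
    | succ k ih =>
      intro x hx
      rw [Function.iterate_succ_apply' f, Function.iterate_succ_apply finv,
        hinvl _ (hfI k hx), ih x hx]
  have hrl : ∀ k, ∀ x ∈ Set.Icc (0:ℝ) 1, f^[k] (finv^[k] x) = x := by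
    intro k
    induction k with
    | zero => intro x _; simp
    | succ k ih =>
      intro x hx
      rw [Function.iterate_succ_apply' finv, Function.iterate_succ_apply f,
        hinvr _ (hvI k hx), ih x hx]
  have hitermono : ∀ k, MonotoneOn (f^[k]) (Set.Icc 0 1) := by
    intro k
    induction k with
    | zero => intro a _ b _ h; simpa using h
    | succ k ih =>
      intro a ha b hb h
      rw [Function.iterate_succ_apply f, Function.iterate_succ_apply f]
      exact ih (hfb.mapsTo ha) (hfb.mapsTo hb) (hfmono.monotoneOn ha hb h)
  have hx₀it : ∀ j, f^[j] x₀ ∈ Set.Ioo (0:ℝ) 1 := fun j => hfIoo.iterate j hx₀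
  have hx₀Icc : ∀ j, f^[j] x₀ ∈ Set.Icc (0:ℝ) 1 := fun j => Set.Ioo_subset_Icc_self (hx₀it j)
  have hchain : StrictMono fun j => f^[j] x₀ :=
    strictMono_nat_of_lt_succ fun j => by
      rw [Function.iterate_succ_apply' f]; exact hfx _ (hx₀it j)
  have hx₀lt : x₀ < f x₀ := hfx x₀ hx₀
  have hgx₀ : g x₀ = x₀ := hgid x₀ fun h => lt_irrefl _ h.1
  have hgfx₀ : g (f x₀) = f x₀ := hgid _ fun h => lt_irrefl _ h.2
  have hsubJ : Set.Icc x₀ (f x₀) ⊆ Set.Icc (0:ℝ) 1 :=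
    Set.Icc_subset_Icc hx₀.1.le (hfIoo hx₀).2.le
  have hJne : x₀ ∈ Set.Icc x₀ (f x₀) := ⟨le_refl _, hx₀lt.le⟩
  have hfJne : f x₀ ∈ Set.Icc x₀ (f x₀) := ⟨hx₀lt.le, le_refl _⟩
  have hgJ : Set.MapsTo g (Set.Icc x₀ (f x₀)) (Set.Icc x₀ (f x₀)) := by
    intro y hy
    constructor
    · rw [← hgx₀]; exact hgmono.monotoneOn (hsubJ hJne) (hsubJ hy) hy.1
    · rw [← hgfx₀]; exact hgmono.monotoneOn (hsubJ hy) (hsubJ hfJne) hy.2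
  have hkf : ∀ k, f^[k] (f x₀) = f^[k+1] x₀ := fun k =>
    (Function.iterate_succ_apply f k x₀).symm
  have hJmem : ∀ k x, x ∈ f^[k] '' Set.Icc x₀ (f x₀) →
      finv^[k] x ∈ Set.Icc x₀ (f x₀) ∧ x = f^[k] (finv^[k] x) ∧
      x ∈ Set.Icc (0:ℝ) 1 ∧ f^[k] x₀ ≤ x ∧ x ≤ f^[k] (f x₀) := by
    rintro k x ⟨y, hy, rfl⟩
    have hyI := hsubJ hy
    have h1 : finv^[k] (f^[k] y) = y := hlr k y hyI
    refine ⟨by rw [h1]; exact hy, by rw [h1], hfI k hyI, ?_, ?_⟩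
    · exact hitermono k (Set.Ioo_subset_Icc_self hx₀) hyI hy.1
    · exact hitermono k hyI (hsubJ hfJne) hy.2
  have hJmem' : ∀ k x, x ∈ Set.Icc (0:ℝ) 1 → finv^[k] x ∈ Set.Icc x₀ (f x₀) →
      x ∈ f^[k] '' Set.Icc x₀ (f x₀) :=
    fun k x hx h => ⟨finv^[k] x, h, hrl k x hx⟩
  have hstep : ∀ m x, x ∈ Set.Icc (0:ℝ) 1 →
      ((f ∘ g)^[m+1] ∘ finv^[m+1]) x
        = ((f ∘ g)^[m] ∘ finv^[m]) (f^[m+1] (g (finv^[m+1] x))) := by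
    intro m x hx
    have hz : g (finv^[m+1] x) ∈ Set.Icc (0:ℝ) 1 := hgb.mapsTo (hvI (m+1) hx)
    simp only [Function.comp_apply]
    rw [Function.iterate_succ_apply f m (g (finv^[m+1] x)),
      hlr m (f (g (finv^[m+1] x))) (hfb.mapsTo hz),
      Function.iterate_succ_apply (f ∘ g) m (finv^[m+1] x), Function.comp_apply]
  suffices hmain : ∀ m : ℕ,
      (∀ k : ℕ, 1 ≤ k → k ≤ m → ∀ x ∈ f^[k] '' Set.Icc x₀ (f x₀),
        ((f ∘ g)^[m] ∘ finv^[m]) x = f^[k] (g (finv^[k] x))) ∧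
      (∀ x ∈ Set.Icc (0:ℝ) 1,
        (∀ k : ℕ, 1 ≤ k → k ≤ m → x ∉ f^[k] '' Set.Icc x₀ (f x₀)) →
        ((f ∘ g)^[m] ∘ finv^[m]) x = x) from hmain n
  intro m
  induction m with
  | zero =>
    exact ⟨fun k hk1 hk0 => absurd (hk1.trans hk0) (by omega),
      fun x hx _ => by simp⟩
  | succ m ih =>
    obtain ⟨ih1, ih2⟩ := ih
    have hfix : ∀ y ∈ f^[m+1] '' Set.Icc x₀ (f x₀), ((f ∘ g)^[m] ∘ finv^[m]) y = y := by
      intro y hy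
      obtain ⟨hv, hyeq, hyI, hylb, hyub⟩ := hJmem (m+1) y hy
      by_cases hc : ∀ k, 1 ≤ k → k ≤ m → y ∉ f^[k] '' Set.Icc x₀ (f x₀)
      · exact ih2 y hyI hc
      · push_neg at hc
        obtain ⟨k, hk1, hkm, hyk⟩ := hc
        obtain ⟨hvk, hykeq, _, hklb, hkub⟩ := hJmem k y hyk
        have hy1 : y = f^[m+1] x₀ := by
          refine le_antisymm ?_ hylb
          calc y ≤ f^[k] (f x₀) := hkub
            _ = f^[k+1] x₀ := hkf k
            _ ≤ f^[m+1] x₀ := hchain.monotone (by omega)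
        obtain ⟨j, hj⟩ : ∃ j, m + 1 = k + j := ⟨m + 1 - k, by omega⟩
        have h2 : finv^[k] y = f^[j] x₀ := by
          rw [hy1, hj, Function.iterate_add_apply, hlr k _ (hx₀Icc j)]
        have h3 : finv^[k] y = f x₀ := by
          refine le_antisymm hvk.2 ?_
          rw [h2]
          have h4 : f^[1] x₀ ≤ f^[j] x₀ := hchain.monotone (by omega)
          simpa using h4
        rw [ih1 k hk1 hkm y hyk, h3, hgfx₀, hy1, hj, Function.iterate_add_apply,
          ← h2, h3]
    constructor
    · intro k hk1 hk2 x hx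
      obtain ⟨hvx, hxeq, hxI, hxlb, hxub⟩ := hJmem k x hx
      rcases Nat.lt_or_ge k (m+1) with hkm | hkm
      · have hkm' : k ≤ m := by omega
        have hnot : finv^[m+1] x ∉ Set.Ioo x₀ (f x₀) := by
          intro hmem
          have hxJ : x ∈ f^[m+1] '' Set.Icc x₀ (f x₀) :=
            hJmem' (m+1) x hxI (Set.Ioo_subset_Icc_self hmem)
          obtain ⟨_, _, _, hlb', _⟩ := hJmem (m+1) x hxJ
          have hxe : x = f^[m+1] x₀ := by
            refine le_antisymm ?_ hlb'
            calc x ≤ f^[k] (f x₀) := hxub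
              _ = f^[k+1] x₀ := hkf k
              _ ≤ f^[m+1] x₀ := hchain.monotone (by omega)
          have hx0 : finv^[m+1] x = x₀ := by
            rw [hxe, hlr (m+1) x₀ (Set.Ioo_subset_Icc_self hx₀)]
          rw [hx0] at hmem
          exact lt_irrefl _ hmem.1
        have hfixx : f^[m+1] (g (finv^[m+1] x)) = x := by
          rw [hgid _ hnot, hrl (m+1) x hxI]
        rw [hstep m x hxI, hfixx]
        exact ih1 k hk1 hkm' x hx
      · have hk : k = m + 1 := by omega
        subst hk
        rw [hstep m x hxI]
        exact hfix _ ⟨g (finv^[m+1] x), hgJ hvx, rfl⟩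
    · intro x hxI hout
      have hnot : finv^[m+1] x ∉ Set.Ioo x₀ (f x₀) := by
        intro hmem
        exact hout (m+1) (by omega) (le_refl _)
          (hJmem' (m+1) x hxI (Set.Ioo_subset_Icc_self hmem))
      rw [hstep m x hxI, hgid _ hnot, hrl (m+1) x hxI]
      exact ih2 x hxI fun k hk1 hk2 => hout k hk1 (by omega)
end

section
/- Let f be a C¹ diffeomorphism of [0,1] onto itself with positive derivative such that f(x) > x for all x ∈ (0,1), suppose var(log Df) ≤ V with V > 0, fix x₀ ∈ (0,1) and let I := [x₀, f(x₀)]. Let g be a C¹ diffeomorphism of [0,1] with positive derivative which equals the identity outside the open interval (x₀, f(x₀)), and suppose there are N ≥ 1 and z ∈ I such that the N-th iterate gᴺ satisfies Dgᴺ(z) > e^{2V}. Then for every n ≥ 1, var(log D((f∘g)ⁿ ∘ f^{−n})) ≥ n·V/N. In particular, var(log D((f∘g)ⁿ ∘ f^{−n})) grows at least linearly in n. -/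
open Set Finset

lemma deriv_iterate (φ : ℝ → ℝ) (hφ : Differentiable ℝ φ) (k : ℕ) (x : ℝ) :
    deriv (φ^[k]) x = ∏ i ∈ Finset.range k, deriv φ (φ^[i] x) := by
  induction k with
  | zero => simp
  | succ k ih =>
    rw [Function.iterate_succ']
    rw [deriv_comp x (hφ.differentiableAt) ((hφ.iterate k).differentiableAt)]
    rw [ih, Finset.prod_range_succ, mul_comm]

lemma sum_pairs_le_evar (F : ℝ → ℝ) (s : Set ℝ) (m : ℕ) (P Q : ℕ → ℝ)
    (hPs : ∀ k, k < m → P k ∈ s) (hQs : ∀ k, k < m → Q k ∈ s)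
    (hPQ : ∀ k, k < m → P k ≤ Q k)
    (hQP : ∀ k, k + 1 < m → Q k ≤ P (k+1)) :
    ∑ k ∈ Finset.range m, edist (F (Q k)) (F (P k)) ≤ eVariationOn F s := by
  rcases Nat.eq_zero_or_pos m with hm | hm
  · simp [hm]
  set u : ℕ → ℝ := fun j => if j / 2 < m then (if j % 2 = 0 then P (j/2) else Q (j/2)) else Q (m-1) with hu
  have hu2k : ∀ k, k < m → u (2*k) = P k := by
    intro k hk
    have h1 : 2*k/2 = k := by omega
    have h2 : 2*k % 2 = 0 := by omega
    simp only [hu, h1, h2, if_pos hk]; norm_num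
  have hu2k1 : ∀ k, k < m → u (2*k+1) = Q k := by
    intro k hk
    have h1 : (2*k+1)/2 = k := by omega
    have h2 : (2*k+1) % 2 = 1 := by omega
    simp only [hu, h1, h2, if_pos hk]
    norm_num
  have humem : ∀ j, u j ∈ s := by
    intro j
    simp only [hu]
    split_ifs with h1 h2
    · exact hPs _ h1
    · exact hQs _ h1
    · exact hQs _ (by omega)
  have humono : Monotone u := by
    apply monotone_nat_of_le_succ
    intro j
    rcases Nat.even_or_odd j with ⟨k, hk⟩ | ⟨k, hk⟩
    · -- j = 2k
      subst hk
      have hj : k + k = 2*k := by ring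
      rw [hj]
      by_cases hkm : k < m
      · rw [hu2k k hkm, hu2k1 k hkm]; exact hPQ k hkm
      · have e1 : u (2*k) = Q (m-1) := by
          simp only [hu]; rw [if_neg (by omega)]
        have e2 : u (2*k+1) = Q (m-1) := by
          simp only [hu]; rw [if_neg (by omega)]
        rw [e1, e2]
    · -- j = 2k+1
      subst hk
      by_cases hkm : k < m
      · rw [hu2k1 k hkm]
        by_cases hk1m : k + 1 < m
        · have : 2*k+1+1 = 2*(k+1) := by ring
          rw [this, hu2k (k+1) hk1m]
          exact hQP k hk1m
        · have hkeq : k = m - 1 := by omega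
          have e2 : u (2*k+1+1) = Q (m-1) := by
            simp only [hu]; rw [if_neg (by omega)]
          rw [e2, hkeq]
      · have e1 : u (2*k+1) = Q (m-1) := by
          simp only [hu]; rw [if_neg (by omega)]
        have e2 : u (2*k+1+1) = Q (m-1) := by
          simp only [hu]; rw [if_neg (by omega)]
        rw [e1, e2]
  have key := eVariationOn.sum_le (f := F) (n := 2*m) humono humem
  refine le_trans ?_ key
  have hsub : ∑ k ∈ Finset.range m, edist (F (Q k)) (F (P k))
      = ∑ j ∈ (Finset.range m).image (fun k => 2*k), edist (F (u (j+1))) (F (u j)) := by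
    rw [Finset.sum_image (by intro a _ b _ h; simp only at h; omega)]
    apply Finset.sum_congr rfl
    intro k hk
    rw [Finset.mem_range] at hk
    rw [hu2k k hk, hu2k1 k hk]
  rw [hsub]
  apply Finset.sum_le_sum_of_subset
  intro j hj
  simp only [Finset.mem_image, Finset.mem_range] at hj ⊢
  omega

/-- **Linear growth of the variation for the perturbed map:** with `f` a `C¹`
diffeomorphism of `[0,1]` with positive derivative, `f(x) > x` on `(0,1)`,
`var(log Df) ≤ V`, `V > 0`, inverse `finv`, and `g` a `C¹` diffeomorphism of `[0,1]`
with positive derivative, identity outside `(x₀, f(x₀))`, such that `Dgᴺ(z) > e^{2V}`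
for some `N ≥ 1` and `z ∈ I = [x₀, f(x₀)]`: for every `n ≥ 1`,
`var(log D((f∘g)ⁿ ∘ f^{-n})) ≥ n·V/N`. -/
theorem variation_fg_pow_comp_finv_pow_linear_growth
    (f finv g : ℝ → ℝ) (V : ℝ) (hV : 0 < V)
    (hf : ContDiff ℝ 1 f)
    (hfb : Set.BijOn f (Set.Icc 0 1) (Set.Icc 0 1))
    (hf' : ∀ x ∈ Set.Icc (0:ℝ) 1, 0 < deriv f x)
    (hfx : ∀ x ∈ Set.Ioo (0:ℝ) 1, x < f x)
    (hfinv : ContDiff ℝ 1 finv)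
    (hinvl : ∀ x ∈ Set.Icc (0:ℝ) 1, finv (f x) = x)
    (hinvr : ∀ x ∈ Set.Icc (0:ℝ) 1, f (finv x) = x)
    (hvar : eVariationOn (fun x => Real.log (deriv f x)) (Set.Icc 0 1) ≤ ENNReal.ofReal V)
    (x₀ : ℝ) (hx₀ : x₀ ∈ Set.Ioo (0:ℝ) 1)
    (hg : ContDiff ℝ 1 g)
    (hgb : Set.BijOn g (Set.Icc 0 1) (Set.Icc 0 1))
    (hg' : ∀ x ∈ Set.Icc (0:ℝ) 1, 0 < deriv g x)
    (hgid : ∀ x : ℝ, x ∉ Set.Ioo x₀ (f x₀) → g x = x)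
    (N : ℕ) (hN : 1 ≤ N) (z : ℝ) (hz : z ∈ Set.Icc x₀ (f x₀))
    (hDg : Real.exp (2 * V) < deriv (g^[N]) z)
    (n : ℕ) (hn : 1 ≤ n) :
    ENNReal.ofReal ((n : ℝ) * V / N) ≤
      eVariationOn (fun x => Real.log (deriv ((f ∘ g)^[n] ∘ finv^[n]) x))
        (Set.Icc 0 1) := by
  -- basic differentiability
  have hfd : Differentiable ℝ f := hf.differentiable one_ne_zero
  have hgd : Differentiable ℝ g := hg.differentiable one_ne_zero
  have hfinvd : Differentiable ℝ finv := hfinv.differentiable one_ne_zero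
  -- monotonicity of f and g on [0,1]
  have hfm : StrictMonoOn f (Icc 0 1) :=
    strictMonoOn_of_deriv_pos (convex_Icc 0 1) hfd.continuous.continuousOn
      (fun x hx => hf' x (by rw [interior_Icc] at hx; exact ⟨hx.1.le, hx.2.le⟩))
  have hgm : StrictMonoOn g (Icc 0 1) :=
    strictMonoOn_of_deriv_pos (convex_Icc 0 1) hgd.continuous.continuousOn
      (fun x hx => hg' x (by rw [interior_Icc] at hx; exact ⟨hx.1.le, hx.2.le⟩))
  have h01 : (0:ℝ) ∈ Icc (0:ℝ) 1 := by norm_num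
  have h11 : (1:ℝ) ∈ Icc (0:ℝ) 1 := by norm_num
  have hx₀I : x₀ ∈ Icc (0:ℝ) 1 := ⟨hx₀.1.le, hx₀.2.le⟩
  -- f 0 = 0 and f 1 = 1
  have hf0 : f 0 = 0 := by
    obtain ⟨a, haI, ha⟩ := hfb.2.2 h01
    rcases eq_or_lt_of_le haI.1 with h | h
    · rw [← h] at ha; exact ha
    · exfalso
      have := hfm h01 haI h
      rw [ha] at this
      exact absurd (hfb.1 h01).1 (by linarith)
  have hf1 : f 1 = 1 := by
    obtain ⟨a, haI, ha⟩ := hfb.2.2 h11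
    rcases eq_or_lt_of_le haI.2 with h | h
    · rw [h] at ha; exact ha
    · exfalso
      have := hfm haI h11 h
      rw [ha] at this
      exact absurd (hfb.1 h11).2 (by linarith)
  have hfIoo : ∀ x ∈ Ioo (0:ℝ) 1, f x ∈ Ioo (0:ℝ) 1 := by
    intro x hx
    constructor
    · rw [← hf0]; exact hfm h01 ⟨hx.1.le, hx.2.le⟩ hx.1
    · rw [← hf1]; exact hfm ⟨hx.1.le, hx.2.le⟩ h11 hx.2
  have hfx₀Ioo : f x₀ ∈ Ioo (0:ℝ) 1 := hfIoo x₀ hx₀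
  have hfx₀I : f x₀ ∈ Icc (0:ℝ) 1 := ⟨hfx₀Ioo.1.le, hfx₀Ioo.2.le⟩
  have hx₀lt : x₀ < f x₀ := hfx x₀ hx₀
  -- the orbit X k = f^[k] x₀
  set X : ℕ → ℝ := fun k => f^[k] x₀ with hX
  have hXsucc : ∀ k, X (k+1) = f (X k) := fun k => Function.iterate_succ_apply' f k x₀
  have hXIoo : ∀ k, X k ∈ Ioo (0:ℝ) 1 := by
    intro k
    induction k with
    | zero => exact hx₀
    | succ k ih => rw [hXsucc]; exact hfIoo _ ih
  have hXI : ∀ k, X k ∈ Icc (0:ℝ) 1 := fun k => ⟨(hXIoo k).1.le, (hXIoo k).2.le⟩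
  have hXlt : ∀ k, X k < X (k+1) := by
    intro k; rw [hXsucc]; exact hfx _ (hXIoo k)
  have hXmono : StrictMono X := strictMono_nat_of_lt_succ hXlt
  -- finv facts
  have hfinvI : ∀ a ∈ Icc (0:ℝ) 1, finv a ∈ Icc (0:ℝ) 1 := by
    intro a ha
    obtain ⟨x, hxI, hxa⟩ := hfb.2.2 ha
    rw [← hxa, hinvl x hxI]; exact hxI
  have hfinv_mono : ∀ a ∈ Icc (0:ℝ) 1, ∀ b ∈ Icc (0:ℝ) 1, a ≤ b → finv a ≤ finv b := by
    intro a ha b hb hab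
    by_contra h
    push_neg at h
    have := hfm (hfinvI b hb) (hfinvI a ha) h
    rw [hinvr a ha, hinvr b hb] at this
    linarith
  have hfge : ∀ x ∈ Icc (0:ℝ) 1, x ≤ f x := by
    intro x hx
    rcases eq_or_lt_of_le hx.1 with h | h
    · rw [← h, hf0]
    rcases eq_or_lt_of_le hx.2 with h' | h'
    · rw [h', hf1]
    · exact (hfx x ⟨h, h'⟩).le
  have hfinv_le : ∀ a ∈ Icc (0:ℝ) 1, finv a ≤ a := by
    intro a ha
    have := hfge (finv a) (hfinvI a ha)
    rw [hinvr a ha] at this; exact this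
  have hfinvIter : ∀ m, ∀ a ∈ Icc (0:ℝ) 1, finv^[m] a ∈ Icc (0:ℝ) 1 ∧ finv^[m] a ≤ a := by
    intro m
    induction m with
    | zero => intro a ha; simp [ha]
    | succ m ih =>
      intro a ha
      obtain ⟨h1, h2⟩ := ih a ha
      rw [Function.iterate_succ_apply']
      exact ⟨hfinvI _ h1, le_trans (hfinv_le _ h1) h2⟩
  -- inverse of iterates
  have hfkI : ∀ k, ∀ a ∈ Icc (0:ℝ) 1, f^[k] a ∈ Icc (0:ℝ) 1 := by
    intro k
    induction k with
    | zero => intro a ha; simpa using ha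
    | succ k ih =>
      intro a ha
      rw [Function.iterate_succ_apply']
      exact hfb.1 (ih a ha)
  have hfkIoo : ∀ k, ∀ a ∈ Ioo (0:ℝ) 1, f^[k] a ∈ Ioo (0:ℝ) 1 := by
    intro k
    induction k with
    | zero => intro a ha; simpa using ha
    | succ k ih =>
      intro a ha
      rw [Function.iterate_succ_apply']
      exact hfIoo _ (ih a ha)
  have hfinvf : ∀ k, ∀ a ∈ Icc (0:ℝ) 1, finv^[k] (f^[k] a) = a := by
    intro k
    induction k with
    | zero => intro a _; simp
    | succ k ih =>
      intro a ha
      rw [Function.iterate_succ_apply' f, Function.iterate_succ_apply finv,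
        hinvl _ (hfkI k a ha), ih a ha]
  have hfkmono : ∀ k, StrictMonoOn (f^[k]) (Icc 0 1) := by
    intro k
    induction k with
    | zero => intro a _ b _ h; simpa using h
    | succ k ih =>
      intro a haI b hbI h
      rw [Function.iterate_succ_apply' f, Function.iterate_succ_apply' f]
      exact hfm (hfkI k a haI) (hfkI k b hbI) (ih haI hbI h)
  -- g fixes x₀ and f x₀
  have hgx₀ : g x₀ = x₀ := hgid x₀ (fun h => absurd h.1 (lt_irrefl x₀))
  have hgfx₀ : g (f x₀) = f x₀ := hgid (f x₀) (fun h => absurd h.2 (lt_irrefl (f x₀)))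
  have hIsub : Icc x₀ (f x₀) ⊆ Icc (0:ℝ) 1 := fun t ht => ⟨le_trans hx₀.1.le ht.1, le_trans ht.2 hfx₀Ioo.2.le⟩
  have hIoosub : Ioo x₀ (f x₀) ⊆ Ioo (0:ℝ) 1 := fun t ht => ⟨lt_trans hx₀.1 ht.1, lt_trans ht.2 hfx₀Ioo.2⟩
  have hgI : ∀ u ∈ Icc x₀ (f x₀), g u ∈ Icc x₀ (f x₀) := by
    intro u hu
    constructor
    · rw [← hgx₀]
      exact (hgm.monotoneOn) hx₀I (hIsub hu) hu.1
    · rw [← hgfx₀]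
      exact (hgm.monotoneOn) (hIsub hu) hfx₀I hu.2
  have hgIoo : ∀ u ∈ Ioo x₀ (f x₀), g u ∈ Ioo x₀ (f x₀) := by
    intro u hu
    constructor
    · rw [← hgx₀]; exact hgm hx₀I (hIsub ⟨hu.1.le, hu.2.le⟩) hu.1
    · rw [← hgfx₀]; exact hgm (hIsub ⟨hu.1.le, hu.2.le⟩) hfx₀I hu.2
  -- deriv g = 1 at x₀ and f x₀
  have hdgx₀ : deriv g x₀ = 1 := by
    have h1 : HasDerivWithinAt g (deriv g x₀) (Iic x₀) x₀ :=
      (hgd.differentiableAt.hasDerivAt).hasDerivWithinAt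
    have h2 : HasDerivWithinAt g 1 (Iic x₀) x₀ := by
      apply (hasDerivWithinAt_id x₀ (Iic x₀)).congr
      · intro x hx
        exact hgid x (fun hc => absurd hc.1 (not_lt.2 hx))
      · exact hgx₀
    have := h1.derivWithin (uniqueDiffOn_Iic x₀ x₀ (self_mem_Iic))
    rw [← this, h2.derivWithin (uniqueDiffOn_Iic x₀ x₀ (self_mem_Iic))]
  have hdgfx₀ : deriv g (f x₀) = 1 := by
    have h1 : HasDerivWithinAt g (deriv g (f x₀)) (Ici (f x₀)) (f x₀) :=
      (hgd.differentiableAt.hasDerivAt).hasDerivWithinAt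
    have h2 : HasDerivWithinAt g 1 (Ici (f x₀)) (f x₀) := by
      apply (hasDerivWithinAt_id (f x₀) (Ici (f x₀))).congr
      · intro x hx
        exact hgid x (fun hc => absurd hc.2 (not_lt.2 hx))
      · exact hgfx₀
    have := h1.derivWithin (uniqueDiffOn_Ici (f x₀) (f x₀) (self_mem_Ici))
    rw [← this, h2.derivWithin (uniqueDiffOn_Ici (f x₀) (f x₀) (self_mem_Ici))]
  -- z is in the open interval
  have hexp1 : (1:ℝ) < Real.exp (2*V) := by
    nlinarith [Real.add_one_le_exp (2*V)]
  have hzIoo : z ∈ Ioo x₀ (f x₀) := by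
    rcases eq_or_lt_of_le hz.1 with h | h
    · exfalso
      have hfix : g z = z := by rw [← h, hgx₀]
      have : deriv (g^[N]) z = 1 := by
        rw [deriv_iterate g hgd N z]
        have : ∀ i, g^[i] z = z := fun i => Function.iterate_fixed hfix i
        calc ∏ i ∈ Finset.range N, deriv g (g^[i] z)
            = ∏ i ∈ Finset.range N, (1:ℝ) := by
              apply Finset.prod_congr rfl
              intro i _
              rw [this i, ← h, hdgx₀]
          _ = 1 := by simp
      rw [this] at hDg; linarith
    rcases eq_or_lt_of_le hz.2 with h' | h'
    · exfalso
      have hfix : g z = z := by rw [h', hgfx₀]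
      have : deriv (g^[N]) z = 1 := by
        rw [deriv_iterate g hgd N z]
        have hit : ∀ i, g^[i] z = z := fun i => Function.iterate_fixed hfix i
        calc ∏ i ∈ Finset.range N, deriv g (g^[i] z)
            = ∏ i ∈ Finset.range N, (1:ℝ) := by
              apply Finset.prod_congr rfl
              intro i _
              rw [hit i, h', hdgfx₀]
          _ = 1 := by simp
      rw [this] at hDg; linarith
    exact ⟨h, h'⟩
  -- the g-orbit of z
  set w : ℕ → ℝ := fun j => g^[j] z with hw
  have hwsucc : ∀ j, w (j+1) = g (w j) := fun j => Function.iterate_succ_apply' g j z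
  have hwIoo : ∀ j, w j ∈ Ioo x₀ (f x₀) := by
    intro j
    induction j with
    | zero => exact hzIoo
    | succ j ih => rw [hwsucc]; exact hgIoo _ ih
  have hwI01 : ∀ j, w j ∈ Icc (0:ℝ) 1 := fun j => hIsub ⟨(hwIoo j).1.le, (hwIoo j).2.le⟩
  have hdgw : ∀ j, 0 < deriv g (w j) := fun j => hg' _ (hwI01 j)
  -- log of deriv of g^[N]
  have hsumlog : (2*V) < ∑ j ∈ Finset.range N, Real.log (deriv g (w j)) := by
    have hprod : deriv (g^[N]) z = ∏ j ∈ Finset.range N, deriv g (w j) :=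
      deriv_iterate g hgd N z
    have hpos : (0:ℝ) < ∏ j ∈ Finset.range N, deriv g (w j) :=
      Finset.prod_pos (fun j _ => hdgw j)
    have : Real.log (Real.exp (2*V)) < Real.log (deriv (g^[N]) z) :=
      Real.log_lt_log (Real.exp_pos _) hDg
    rw [Real.log_exp, hprod, Real.log_prod (fun j _ => (hdgw j).ne')] at this
    exact this
  -- L1: left region
  have hL1 : ∀ m, ∀ u ∈ Icc x₀ (f x₀), (f ∘ g)^[m] (finv^[m] u) = u := by
    intro m
    induction m with
    | zero => intro u _; simp
    | succ m ih =>
      intro u hu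
      have huI : u ∈ Icc (0:ℝ) 1 := hIsub hu
      have hfm_u := hfinvIter m u huI
      have ht : finv^[m+1] u = finv (finv^[m] u) := Function.iterate_succ_apply' finv m u
      have htle : finv^[m+1] u ≤ x₀ := by
        rw [ht]
        have h1 : finv^[m] u ≤ f x₀ := le_trans hfm_u.2 hu.2
        have := hfinv_mono _ hfm_u.1 _ hfx₀I h1
        rw [hinvl x₀ hx₀I] at this
        exact this
      rw [Function.iterate_succ_apply (f ∘ g) m]
      have hgeq : g (finv^[m+1] u) = finv^[m+1] u :=
        hgid _ (fun hc => absurd hc.1 (not_lt.2 htle))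
      have : (f ∘ g) (finv^[m+1] u) = finv^[m] u := by
        show f (g (finv^[m+1] u)) = finv^[m] u
        rw [hgeq, ht]
        exact hinvr _ hfm_u.1
      rw [this]
      exact ih u hu
  -- L2: right region
  have hL2 : ∀ m, ∀ v ∈ Icc (f x₀) 1, (f ∘ g)^[m] v = f^[m] v ∧ f^[m] v ∈ Icc (f x₀) 1 := by
    intro m
    induction m with
    | zero => intro v hv; simpa using hv
    | succ m ih =>
      intro v hv
      have hvI : v ∈ Icc (0:ℝ) 1 := ⟨le_trans hfx₀Ioo.1.le hv.1, hv.2⟩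
      have hgeq : g v = v := hgid _ (fun hc => absurd hc.2 (not_lt.2 hv.1))
      have hfv : f v ∈ Icc (f x₀) 1 := by
        constructor
        · exact le_trans (hfge _ hfx₀I) ((hfm.monotoneOn) hfx₀I hvI hv.1)
        · exact (hfb.1 hvI).2
      have h1 : (f ∘ g)^[m+1] v = (f ∘ g)^[m] (f v) := by
        rw [Function.iterate_succ_apply (f ∘ g) m v]
        simp only [Function.comp_apply, hgeq]
      obtain ⟨ha, hb⟩ := ih (f v) hfv
      constructor
      · rw [h1, ha, ← Function.iterate_succ_apply f m v]
      · rw [Function.iterate_succ_apply f m v]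
        exact hb
  -- the key identity
  have hmain : ∀ k, 1 ≤ k → k ≤ n → ∀ y ∈ Icc (X k) (X (k+1)),
      (f ∘ g)^[n] (finv^[n] y) = f^[k] (g (finv^[k] y)) := by
    intro k hk1 hkn y hy
    have hyI : y ∈ Icc (0:ℝ) 1 := ⟨le_trans (hXI k).1 hy.1, le_trans hy.2 (hXI (k+1)).2⟩
    -- finv^[k] y ∈ I
    have hstep : ∀ i, ∀ t ∈ Icc (X (i+1)) (X (i+2)), finv t ∈ Icc (X i) (X (i+1)) := by
      intro i t ht
      have htI : t ∈ Icc (0:ℝ) 1 := ⟨le_trans (hXI (i+1)).1 ht.1, le_trans ht.2 (hXI (i+2)).2⟩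
      have e1 : finv (X (i+1)) = X i := by
        rw [hXsucc i]; exact hinvl _ (hXI i)
      have e2 : finv (X (i+2)) = X (i+1) := by
        rw [hXsucc (i+1)]; exact hinvl _ (hXI (i+1))
      constructor
      · rw [← e1]; exact hfinv_mono _ (hXI (i+1)) _ htI ht.1
      · rw [← e2]; exact hfinv_mono _ htI _ (hXI (i+2)) ht.2
    have hdown : ∀ i, ∀ t ∈ Icc (X i) (X (i+1)), finv^[i] t ∈ Icc (X 0) (X 1) := by
      intro i
      induction i with
      | zero => intro t ht; simpa using ht
      | succ i ih =>
        intro t ht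
        rw [Function.iterate_succ_apply finv i t]
        exact ih _ (hstep i t ht)
    have hu : finv^[k] y ∈ Icc x₀ (f x₀) := by
      have := hdown k y hy
      simpa [hX, ← hXsucc 0] using this
    set u := finv^[k] y with hudef
    have huI : u ∈ Icc (0:ℝ) 1 := hIsub hu
    have hsplit : finv^[n] y = finv^[n-k] u := by
      rw [hudef, ← Function.iterate_add_apply finv (n-k) k y]
      congr 1
      omega
    have hsplit2 : (f ∘ g)^[n] (finv^[n-k] u) = (f ∘ g)^[k] ((f ∘ g)^[n-k] (finv^[n-k] u)) := by
      rw [← Function.iterate_add_apply (f ∘ g) k (n-k)]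
      congr 1
      omega
    rw [hsplit, hsplit2, hL1 (n-k) u hu]
    -- now (f∘g)^[k] u = f^[k] (g u)
    have hgu : g u ∈ Icc x₀ (f x₀) := hgI u hu
    have hguI : g u ∈ Icc (0:ℝ) 1 := hIsub hgu
    have hfgu : f (g u) ∈ Icc (f x₀) 1 := by
      constructor
      · exact (hfm.monotoneOn) hx₀I hguI hgu.1
      · exact (hfb.1 hguI).2
    have hk' : k = (k-1) + 1 := by omega
    rw [hk', Function.iterate_succ_apply (f ∘ g) (k-1) u]
    have : (f ∘ g) u = f (g u) := rfl
    rw [this, (hL2 (k-1) (f (g u)) hfgu).1]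
    exact (Function.iterate_succ_apply f (k-1) (g u)).symm
  -- the map h = (f∘g)^[n] ∘ finv^[n]
  set h : ℝ → ℝ := (f ∘ g)^[n] ∘ finv^[n] with hh
  have hhd : Differentiable ℝ h :=
    ((hfd.comp hgd).iterate n).comp (hfinvd.iterate n)
  -- derivative of f^[k] is positive on [0,1]
  have hDfk_pos : ∀ k, ∀ a ∈ Icc (0:ℝ) 1, 0 < deriv (f^[k]) a := by
    intro k a ha
    rw [deriv_iterate f hfd k a]
    exact Finset.prod_pos (fun i _ => hf' _ (hfkI i a ha))
  -- derivative of finv^[k] at f^[k] a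
  have hfinvderiv : ∀ k, ∀ a ∈ Ioo (0:ℝ) 1,
      deriv (finv^[k]) (f^[k] a) = (deriv (f^[k]) a)⁻¹ := by
    intro k a ha
    have haI : a ∈ Icc (0:ℝ) 1 := ⟨ha.1.le, ha.2.le⟩
    have heq : (finv^[k] ∘ f^[k]) =ᶠ[nhds a] id := by
      apply Filter.eventuallyEq_of_mem (Ioo_mem_nhds ha.1 ha.2)
      intro t ht
      exact hfinvf k t ⟨ht.1.le, ht.2.le⟩
    have h1 : deriv (finv^[k] ∘ f^[k]) a = 1 := by
      rw [heq.deriv_eq, deriv_id]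
    rw [deriv_comp a ((hfinvd.iterate k).differentiableAt) ((hfd.iterate k).differentiableAt)] at h1
    have hp := hDfk_pos k a haI
    field_simp at h1 ⊢
    linarith [h1]
  -- derivative of h at interior points of [X k, X (k+1)]
  have hderiv_int : ∀ k, 1 ≤ k → k ≤ n → ∀ a ∈ Ioo x₀ (f x₀),
      deriv h (f^[k] a) = deriv (f^[k]) (g a) * deriv g a * (deriv (f^[k]) a)⁻¹ := by
    intro k hk1 hkn a ha
    have haIoo : a ∈ Ioo (0:ℝ) 1 := hIoosub ha
    have haI : a ∈ Icc (0:ℝ) 1 := ⟨haIoo.1.le, haIoo.2.le⟩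
    have hq1 : X k < f^[k] a := hfkmono k hx₀I haI ha.1
    have hq2 : f^[k] a < X (k+1) := by
      have : X (k+1) = f^[k] (f x₀) := Function.iterate_succ_apply f k x₀
      rw [this]
      exact hfkmono k haI hfx₀I ha.2
    have heq : h =ᶠ[nhds (f^[k] a)] (f^[k] ∘ (g ∘ finv^[k])) := by
      apply Filter.eventuallyEq_of_mem (Ioo_mem_nhds hq1 hq2)
      intro t ht
      exact hmain k hk1 hkn t ⟨ht.1.le, ht.2.le⟩
    rw [heq.deriv_eq]
    rw [deriv_comp _ ((hfd.iterate k).differentiableAt)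
      ((hgd.comp (hfinvd.iterate k)).differentiableAt)]
    rw [deriv_comp _ hgd.differentiableAt ((hfinvd.iterate k).differentiableAt)]
    simp only [Function.comp_apply]
    rw [hfinvf k a haI, hfinvderiv k a haIoo]
    ring
  -- derivative of h at X k is 1
  have hderiv_X : ∀ k, 1 ≤ k → k ≤ n → deriv h (X k) = 1 := by
    intro k hk1 hkn
    set φ : ℝ → ℝ := f^[k] ∘ (g ∘ finv^[k]) with hφ
    have hφd : Differentiable ℝ φ := (hfd.iterate k).comp (hgd.comp (hfinvd.iterate k))
    have hφX : deriv φ (X k) = 1 := by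
      rw [hφ]
      rw [deriv_comp _ ((hfd.iterate k).differentiableAt)
        ((hgd.comp (hfinvd.iterate k)).differentiableAt)]
      rw [deriv_comp _ hgd.differentiableAt ((hfinvd.iterate k).differentiableAt)]
      simp only [Function.comp_apply]
      have e1 : finv^[k] (X k) = x₀ := hfinvf k x₀ hx₀I
      rw [e1, hgx₀, hdgx₀]
      have e2 : deriv (finv^[k]) (X k) = (deriv (f^[k]) x₀)⁻¹ := hfinvderiv k x₀ hx₀
      rw [e2]
      have hp := hDfk_pos k x₀ hx₀I
      field_simp
    have hXmem : X k ∈ Icc (X k) (X (k+1)) := ⟨le_refl _, (hXlt k).le⟩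
    have hud : UniqueDiffWithinAt ℝ (Icc (X k) (X (k+1))) (X k) :=
      uniqueDiffOn_Icc (hXlt k) _ hXmem
    have h1 : HasDerivWithinAt h (deriv h (X k)) (Icc (X k) (X (k+1))) (X k) :=
      (hhd.differentiableAt.hasDerivAt).hasDerivWithinAt
    have h2 : HasDerivWithinAt h 1 (Icc (X k) (X (k+1))) (X k) := by
      have h3 : HasDerivWithinAt φ 1 (Icc (X k) (X (k+1))) (X k) := by
        have := (hφd.differentiableAt.hasDerivAt (x := X k)).hasDerivWithinAt
          (s := Icc (X k) (X (k+1)))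
        rwa [hφX] at this
      apply h3.congr
      · intro t ht
        exact hmain k hk1 hkn t ht
      · exact hmain k hk1 hkn (X k) hXmem
    rw [← h1.derivWithin hud, h2.derivWithin hud]
  -- F = log of deriv h
  set F : ℝ → ℝ := fun x => Real.log (deriv h x) with hF
  have hFX : ∀ k, 1 ≤ k → k ≤ n → F (X k) = 0 := by
    intro k hk1 hkn
    rw [hF]
    simp only [hderiv_X k hk1 hkn, Real.log_one]
  -- value of F at the orbit points
  have hFval : ∀ k, 1 ≤ k → k ≤ n → ∀ j,
      F (f^[k] (w j)) = Real.log (deriv g (w j))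
        + Real.log (deriv (f^[k]) (w (j+1))) - Real.log (deriv (f^[k]) (w j)) := by
    intro k hk1 hkn j
    have hwj := hwIoo j
    have hwj01 : w j ∈ Icc (0:ℝ) 1 := hwI01 j
    have hgwj01 : g (w j) ∈ Icc (0:ℝ) 1 := hIsub (hgI (w j) ⟨hwj.1.le, hwj.2.le⟩)
    rw [hF]
    simp only
    have p1 : 0 < deriv (f^[k]) (g (w j)) := hDfk_pos k _ hgwj01
    have p2 : 0 < deriv g (w j) := hdgw j
    have p3 : 0 < deriv (f^[k]) (w j) := hDfk_pos k _ hwj01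
    rw [hderiv_int k hk1 hkn (w j) hwj]
    rw [Real.log_mul (mul_pos p1 p2).ne' (inv_pos.2 p3).ne']
    rw [Real.log_mul p1.ne' p2.ne']
    rw [Real.log_inv, ← hwsucc j]
    ring
  -- iterates of points of I stay in the consecutive intervals
  have hfkbounds : ∀ i, ∀ a ∈ Ioo x₀ (f x₀), f^[i] a ∈ Ioo (X i) (X (i+1)) := by
    intro i a ha
    have haI : a ∈ Icc (0:ℝ) 1 := hIsub ⟨ha.1.le, ha.2.le⟩
    constructor
    · exact hfkmono i hx₀I haI ha.1
    · have e : X (i+1) = f^[i] (f x₀) := Function.iterate_succ_apply f i x₀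
      rw [e]
      exact hfkmono i haI hfx₀I ha.2
  -- log deriv (f^[k]) as a sum
  have hA : ∀ k, ∀ a ∈ Icc (0:ℝ) 1, Real.log (deriv (f^[k]) a)
      = ∑ i ∈ Finset.range k, Real.log (deriv f (f^[i] a)) := by
    intro k a ha
    rw [deriv_iterate f hfd k a, Real.log_prod]
    intro i _
    exact (hf' _ (hfkI i a ha)).ne'
  -- the distortion bound
  have hdist : ∀ k, |Real.log (deriv (f^[k]) (w N)) - Real.log (deriv (f^[k]) (w 0))| ≤ V := by
    intro k
    set L : ℝ → ℝ := fun x => Real.log (deriv f x) with hL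
    set a : ℕ → ℝ := fun i => f^[i] (w 0) with ha
    set b : ℕ → ℝ := fun i => f^[i] (w N) with hb
    have haIoo : ∀ i, a i ∈ Ioo (X i) (X (i+1)) := fun i => hfkbounds i _ (hwIoo 0)
    have hbIoo : ∀ i, b i ∈ Ioo (X i) (X (i+1)) := fun i => hfkbounds i _ (hwIoo N)
    have haI01 : ∀ i, a i ∈ Icc (0:ℝ) 1 := fun i => hfkI i _ (hwI01 0)
    have hbI01 : ∀ i, b i ∈ Icc (0:ℝ) 1 := fun i => hfkI i _ (hwI01 N)
    set P : ℕ → ℝ := fun i => min (a i) (b i) with hP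
    set Q : ℕ → ℝ := fun i => max (a i) (b i) with hQ
    have hsum := sum_pairs_le_evar L (Icc 0 1) k P Q
      (fun i _ => by
        rcases min_cases (a i) (b i) with ⟨e, _⟩ | ⟨e, _⟩ <;> (simp only [hP]; rw [e])
        exacts [haI01 i, hbI01 i])
      (fun i _ => by
        rcases max_cases (a i) (b i) with ⟨e, _⟩ | ⟨e, _⟩ <;> (simp only [hQ]; rw [e])
        exacts [haI01 i, hbI01 i])
      (fun i _ => min_le_max)
      (fun i hi => by
        have h1 : Q i ≤ X (i+1) :=
          max_le (haIoo i).2.le (hbIoo i).2.le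
        have h2 : X (i+1) ≤ P (i+1) :=
          le_min (haIoo (i+1)).1.le (hbIoo (i+1)).1.le
        exact le_trans h1 h2)
    have hsum2 : ∑ i ∈ Finset.range k, ENNReal.ofReal (|L (b i) - L (a i)|)
        ≤ ENNReal.ofReal V := by
      refine le_trans (le_of_eq ?_) (le_trans hsum hvar)
      apply Finset.sum_congr rfl
      intro i _
      rw [edist_dist, Real.dist_eq]
      rcases le_total (a i) (b i) with hab | hab
      · rw [hP, hQ]
        simp only
        rw [min_eq_left hab, max_eq_right hab]
      · rw [hP, hQ]
        simp only
        rw [min_eq_right hab, max_eq_left hab, abs_sub_comm]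
    have hsum3 : ∑ i ∈ Finset.range k, |L (b i) - L (a i)| ≤ V := by
      rw [← ENNReal.ofReal_le_ofReal_iff hV.le] at *
      rw [ENNReal.ofReal_sum_of_nonneg (fun i _ => abs_nonneg _)]
      exact hsum2
    calc |Real.log (deriv (f^[k]) (w N)) - Real.log (deriv (f^[k]) (w 0))|
        = |∑ i ∈ Finset.range k, (L (b i) - L (a i))| := by
          rw [hA k _ (hwI01 N), hA k _ (hwI01 0), ← Finset.sum_sub_distrib]
      _ ≤ ∑ i ∈ Finset.range k, |L (b i) - L (a i)| := Finset.abs_sum_le_sum_abs _ _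
      _ ≤ V := hsum3
  -- sum of F over one interval exceeds V
  have hNpos : (0:ℝ) < N := by exact_mod_cast hN
  have hSk : ∀ k, 1 ≤ k → k ≤ n → V < ∑ j ∈ Finset.range N, F (f^[k] (w j)) := by
    intro k hk1 hkn
    have he : ∑ j ∈ Finset.range N, F (f^[k] (w j))
        = (∑ j ∈ Finset.range N, Real.log (deriv g (w j)))
          + (Real.log (deriv (f^[k]) (w N)) - Real.log (deriv (f^[k]) (w 0))) := by
      rw [← Finset.sum_range_sub (fun j => Real.log (deriv (f^[k]) (w j))) N,
        ← Finset.sum_add_distrib]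
      apply Finset.sum_congr rfl
      intro j _
      rw [hFval k hk1 hkn j]
      ring
    rw [he]
    have habs := abs_le.1 (hdist k)
    linarith [habs.1]
  -- selection of a point with large F in each interval
  have hsel : ∀ k, 1 ≤ k → k ≤ n → ∃ q ∈ Ioo (X k) (X (k+1)), V / N < F q := by
    intro k hk1 hkn
    by_contra hcon
    push_neg at hcon
    have hle : ∑ j ∈ Finset.range N, F (f^[k] (w j)) ≤ ∑ _j ∈ Finset.range N, (V / N) := by
      apply Finset.sum_le_sum
      intro j _
      exact hcon _ (hfkbounds k _ (hwIoo j))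
    rw [Finset.sum_const, Finset.card_range, nsmul_eq_mul] at hle
    have : (N:ℝ) * (V / N) = V := by field_simp
    rw [this] at hle
    linarith [hSk k hk1 hkn]
  have hsel' : ∀ k' : ℕ, ∃ q : ℝ, k' < n → q ∈ Ioo (X (k'+1)) (X (k'+2)) ∧ V / N < F q := by
    intro k'
    by_cases hk : k' < n
    · obtain ⟨q, hq1, hq2⟩ := hsel (k'+1) (by omega) (by omega)
      exact ⟨q, fun _ => ⟨hq1, hq2⟩⟩
    · exact ⟨0, fun hc => absurd hc hk⟩
  choose QQ hQQ using hsel'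
  -- final assembly
  have hfinal := sum_pairs_le_evar F (Icc 0 1) n (fun k' => X (k'+1)) QQ
    (fun k' _ => hXI (k'+1))
    (fun k' hk => by
      have := (hQQ k' hk).1
      exact ⟨le_trans (hXI (k'+1)).1 this.1.le, le_trans this.2.le (hXI (k'+2)).2⟩)
    (fun k' hk => ((hQQ k' hk).1).1.le)
    (fun k' hk => by
      have := (hQQ k' (by omega)).1
      exact this.2.le)
  have hterm : ∀ k' ∈ Finset.range n,
      ENNReal.ofReal (V / N) ≤ edist (F (QQ k')) (F (X (k'+1))) := by
    intro k' hk
    rw [Finset.mem_range] at hk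
    obtain ⟨hq1, hq2⟩ := hQQ k' hk
    rw [hFX (k'+1) (by omega) (by omega), edist_dist, Real.dist_eq, sub_zero]
    apply ENNReal.ofReal_le_ofReal
    rw [abs_of_pos (lt_trans (by positivity) hq2)]
    exact hq2.le
  have hlow : ENNReal.ofReal ((n:ℝ) * V / N)
      ≤ ∑ k' ∈ Finset.range n, edist (F (QQ k')) (F (X (k'+1))) := by
    calc ENNReal.ofReal ((n:ℝ) * V / N)
        = ENNReal.ofReal ((n:ℝ) * (V / N)) := by rw [mul_div_assoc]
      _ = (n : ENNReal) * ENNReal.ofReal (V / N) := by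
          rw [ENNReal.ofReal_mul (by positivity), ENNReal.ofReal_natCast]
      _ = ∑ _k' ∈ Finset.range n, ENNReal.ofReal (V / N) := by
          rw [Finset.sum_const, Finset.card_range, nsmul_eq_mul]
      _ ≤ ∑ k' ∈ Finset.range n, edist (F (QQ k')) (F (X (k'+1))) :=
          Finset.sum_le_sum hterm
  exact le_trans hlow hfinal
end

section
/- Let G be a group and let a, f ∈ G satisfy the relation a·f·a⁻¹ = f². Then: (1) for every k ≥ 0, a^k·f·a^{−k} = f^{2^k}; and (2) there exists a constant C > 0 such that for every integer n ≥ 1 there is a finite list of elements, each belonging to {a, a⁻¹, f, f⁻¹}, whose product equals fⁿ and whose length is at most C·(log₂(n) + 1). In particular, the word length of fⁿ with respect to the generating set {a, f} is O(log n). -/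
private lemma bs_conj {G : Type*} [Group G] (a f : G) (h : a * f * a⁻¹ = f ^ 2) :
    ∀ m : ℕ, a * f ^ m * a⁻¹ = f ^ (2 * m) := by
  intro m
  have : a * f ^ m * a⁻¹ = (a * f * a⁻¹) ^ m := by
    rw [conj_pow]
  rw [this, h, ← pow_mul, mul_comm]

private lemma bs_list {G : Type*} [Group G] (a f : G) (h : a * f * a⁻¹ = f ^ 2) :
    ∀ n : ℕ, 1 ≤ n → ∃ L : List G,
      (∀ x ∈ L, x = a ∨ x = a⁻¹ ∨ x = f ∨ x = f⁻¹) ∧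
      L.prod = f ^ n ∧ L.length ≤ 3 * Nat.log 2 n + 1 := by
  intro n
  induction n using Nat.strong_induction_on with
  | _ n ih =>
    intro hn
    rcases eq_or_lt_of_le hn with h1 | h2
    · refine ⟨[f], ?_, ?_, ?_⟩ <;> simp [← h1]
    -- n ≥ 2
    set m := n / 2 with hm
    have hm1 : 1 ≤ m := Nat.one_le_div_iff (by norm_num) |>.2 h2
    have hmlt : m < n := Nat.div_lt_self (by omega) (by norm_num)
    obtain ⟨L, hmem, hprod, hlen⟩ := ih m hmlt hm1
    set b := n % 2 with hb
    have hnb : n = 2 * m + b := (Nat.div_add_mod n 2).symm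
    refine ⟨[a] ++ L ++ [a⁻¹] ++ (if b = 1 then [f] else []), ?_, ?_, ?_⟩
    · intro x hx
      simp only [List.mem_append, List.mem_singleton] at hx
      rcases hx with ((hx | hx) | hx) | hx
      · tauto
      · exact hmem x hx
      · tauto
      · split_ifs at hx with hb1
        · simp at hx; tauto
        · simp at hx
    · have key : a * L.prod * a⁻¹ = f ^ (2 * m) := by rw [hprod]; exact bs_conj a f h m
      have hb2 : b = 0 ∨ b = 1 := by omega
      rcases hb2 with hb0 | hb1
      · simp only [hb0, if_neg (by norm_num : ¬(0:ℕ) = 1), List.append_nil,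
          List.prod_append, List.prod_cons, List.prod_nil, mul_one, hnb, add_zero]
        exact key
      · simp only [hb1, if_pos rfl, List.prod_append, List.prod_cons, List.prod_nil,
          mul_one, hnb]
        rw [if_pos trivial]
        simp only [List.prod_cons, List.prod_nil, mul_one]
        rw [key, pow_succ]
    · have hlog : Nat.log 2 n = Nat.log 2 m + 1 := by
        have h3 : Nat.log 2 m = Nat.log 2 n - 1 := by rw [hm]; exact Nat.log_div_base 2 n
        have h4 : 0 < Nat.log 2 n := Nat.log_pos (by norm_num) (by omega)
        omega
      have : (if b = 1 then [f] else []).length ≤ 1 := by split_ifs <;> simp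
      simp only [List.length_append, List.length_singleton]
      omega

/-- **Logarithmic distortion from the Baumslag–Solitar relation:** if `a f a⁻¹ = f²`
in a group `G`, then `aᵏ f a⁻ᵏ = f^(2ᵏ)` for all `k ≥ 0`, and there is `C > 0` such that
every power `fⁿ` (`n ≥ 1`) is a product of at most `C (log₂ n + 1)` elements of
`{a, a⁻¹, f, f⁻¹}`; i.e. the word length of `fⁿ` in `⟨a, f⟩` is `O(log n)`. -/
theorem baumslag_solitar_log_distortion
    {G : Type*} [Group G] (a f : G) (h : a * f * a⁻¹ = f ^ 2) :
    (∀ k : ℕ, a ^ k * f * (a⁻¹) ^ k = f ^ (2 ^ k)) ∧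
    ∃ C : ℝ, 0 < C ∧ ∀ n : ℕ, 1 ≤ n → ∃ L : List G,
      (∀ x ∈ L, x = a ∨ x = a⁻¹ ∨ x = f ∨ x = f⁻¹) ∧
      L.prod = f ^ n ∧
      (L.length : ℝ) ≤ C * (Real.logb 2 n + 1) := by
  constructor
  · intro k
    induction k with
    | zero => simp
    | succ k ihk =>
      have : a ^ (k + 1) * f * (a⁻¹) ^ (k + 1) = a * (a ^ k * f * (a⁻¹) ^ k) * a⁻¹ := by
        rw [pow_succ, pow_succ']
        group
      rw [this, ihk, bs_conj a f h, pow_succ, mul_comm]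
  · refine ⟨3, by norm_num, fun n hn => ?_⟩
    obtain ⟨L, hmem, hprod, hlen⟩ := bs_list a f h n hn
    refine ⟨L, hmem, hprod, ?_⟩
    have hcast : (L.length : ℝ) ≤ 3 * (Nat.log 2 n : ℝ) + 1 := by
      exact_mod_cast hlen
    have hlogle : (Nat.log 2 n : ℝ) ≤ Real.logb 2 n := by
      have h1 : (2 : ℝ) ^ (Nat.log 2 n) ≤ (n : ℝ) := by
        exact_mod_cast Nat.pow_log_le_self 2 (by omega)
      calc (Nat.log 2 n : ℝ) = Real.logb 2 ((2 : ℝ) ^ (Nat.log 2 n)) := by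
            rw [Real.logb_pow, Real.logb_self_eq_one (by norm_num : (1:ℝ) < 2)]; ring
        _ ≤ Real.logb 2 n := Real.logb_le_logb_of_le (by norm_num) (by positivity) h1
    nlinarith [hlogle]
end

section
/- Let u : (0,1) → ℝ, let α ∈ (0,1], B ≥ 0, c ∈ ℝ, and let (z_k)_{k∈ℤ} be a strictly increasing sequence in (0,1) with infimum 0 and supremum 1. Suppose that u(z_k) = c for every k ∈ ℤ, and that for every k ∈ ℤ and all x, y ∈ [z_k, z_{k+1}], |u(y) − u(x)| ≤ B·|y − x|^α. Then for all x, y ∈ (0,1), |u(y) − u(x)| ≤ 2B·|y − x|^α; i.e. u is α-Hölder on (0,1) with constant 2B. -/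
/-!
Given `x ≤ y` in `(0,1)`, locate them in pieces `[z k, z (k+1)]` and `[z m, z (m+1)]`.
If `k = m` the Hölder bound on that piece applies directly. Otherwise `u` takes the same
value at `z (k+1)` and `z m`, so `u y - u x` splits into a jump from `x` to `z (k+1)` inside the
first piece and a jump from `z m` to `y` inside the last one; each is at most `B |y - x| ^ α`.
-/

open Set

theorem Monotone.exists_le_lt_succ_int {β : Type*} [LinearOrder β] {z : ℤ → β} (hz : Monotone z)
    {x : β} {k₀ m₀ : ℤ} (hk₀ : z k₀ ≤ x) (hm₀ : x < z m₀) :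
    ∃ k, z k ≤ x ∧ x < z (k + 1) := by
  have hbdd : ∀ k, z k ≤ x → k ≤ m₀ := fun k hk =>
    (hz.reflect_lt (hk.trans_lt hm₀)).le
  obtain ⟨k, hk, hmax⟩ := Int.exists_greatest_of_bdd ⟨m₀, hbdd⟩ ⟨k₀, hk₀⟩
  refine ⟨k, hk, lt_of_not_ge fun hsucc => ?_⟩
  have := hmax (k + 1) hsucc
  omega

theorem Monotone.exists_le_lt_succ_int_of_isGLB_of_isLUB {β : Type*} [LinearOrder β]
    {z : ℤ → β} (hz : Monotone z) {a b x : β} (ha : IsGLB (range z) a) (hb : IsLUB (range z) b)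
    (hx : x ∈ Ioo a b) : ∃ k, z k ≤ x ∧ x < z (k + 1) := by
  obtain ⟨_, ⟨k₀, rfl⟩, -, hk₀⟩ := ha.exists_between hx.1
  obtain ⟨_, ⟨m₀, rfl⟩, hm₀, -⟩ := hb.exists_between hx.2
  exact hz.exists_le_lt_succ_int hk₀.le hm₀

theorem abs_sub_le_two_mul_rpow_of_eq {u : ℝ → ℝ} {α B x p q y : ℝ} (hα : 0 ≤ α)
    (hB : 0 ≤ B) (hxp : x ≤ p) (hpq : p ≤ q) (hqy : q ≤ y) (hu : u p = u q)
    (hleft : |u p - u x| ≤ B * |p - x| ^ α) (hright : |u y - u q| ≤ B * |y - q| ^ α) :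
    |u y - u x| ≤ 2 * B * |y - x| ^ α := by
  have hp : |p - x| ^ α ≤ |y - x| ^ α :=
    Real.rpow_le_rpow (abs_nonneg _)
      (abs_sub_left_of_mem_uIcc (mem_uIcc_of_le hxp (hpq.trans hqy))) hα
  have hq : |y - q| ^ α ≤ |y - x| ^ α :=
    Real.rpow_le_rpow (abs_nonneg _)
      (abs_sub_right_of_mem_uIcc (mem_uIcc_of_le (hxp.trans hpq) hqy)) hα
  calc |u y - u x| = |(u y - u q) + (u p - u x)| := by rw [hu]; ring_nf
    _ ≤ |u y - u q| + |u p - u x| := abs_add_le _ _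
    _ ≤ B * |y - x| ^ α + B * |y - x| ^ α := by
        gcongr
        exacts [hright.trans (by gcongr), hleft.trans (by gcongr)]
    _ = 2 * B * |y - x| ^ α := by ring

theorem holder_glue_along_partition_general
    (u : ℝ → ℝ) (α B c : ℝ) (hα : α ∈ Set.Ioc (0:ℝ) 1) (hB : 0 ≤ B)
    (z : ℤ → ℝ) (hmono : StrictMono z)
    (hinf : IsGLB (Set.range z) 0) (hsup : IsLUB (Set.range z) 1)
    (hc : ∀ k : ℤ, u (z k) = c)
    (hholder : ∀ k : ℤ, ∀ x ∈ Set.Icc (z k) (z (k + 1)), ∀ y ∈ Set.Icc (z k) (z (k + 1)),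
      |u y - u x| ≤ B * |y - x| ^ α) :
    ∀ x ∈ Set.Ioo (0:ℝ) 1, ∀ y ∈ Set.Ioo (0:ℝ) 1,
      |u y - u x| ≤ 2 * B * |y - x| ^ α := by
  intro x hx y hy
  wlog hxy : x ≤ y generalizing x y
  · simpa only [abs_sub_comm] using this y hy x hx (le_of_not_ge hxy)
  obtain ⟨k, hxk, hxk'⟩ := hmono.monotone.exists_le_lt_succ_int_of_isGLB_of_isLUB hinf hsup hx
  obtain ⟨m, hym, hym'⟩ := hmono.monotone.exists_le_lt_succ_int_of_isGLB_of_isLUB hinf hsup hy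
  have hkm : k ≤ m := Int.lt_add_one_iff.mp (hmono.lt_iff_lt.mp (hxk.trans_lt (hxy.trans_lt hym')))
  obtain rfl | hkm := hkm.eq_or_lt
  · calc |u y - u x| ≤ B * |y - x| ^ α := hholder k x ⟨hxk, hxk'.le⟩ y ⟨hym, hym'.le⟩
      _ ≤ 2 * B * |y - x| ^ α := by gcongr; linarith
  · have hzkm : z (k + 1) ≤ z m := hmono.monotone hkm
    exact abs_sub_le_two_mul_rpow_of_eq hα.1.le hB hxk'.le hzkm hym (by rw [hc, hc])
      (hholder k x ⟨hxk, hxk'.le⟩ _ ⟨(hmono (lt_add_one k)).le, le_rfl⟩)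
      (hholder m _ ⟨le_rfl, (hmono (lt_add_one m)).le⟩ y ⟨hym, hym'.le⟩)

/-- **Globalization of Hölder estimates across a bi-infinite partition:** if `u` takes
the same value `c` at all points of a strictly increasing bi-infinite sequence
`(z_k)` in `(0,1)` accumulating at `0` and `1`, and `u` is `α`-Hölder with constant `B`
on each interval `[z_k, z_{k+1}]`, then `u` is `α`-Hölder with constant `2B` on `(0,1)`. -/
theorem holder_glue_along_partition
    (u : ℝ → ℝ) (α B c : ℝ) (hα : α ∈ Set.Ioc (0:ℝ) 1) (hB : 0 ≤ B)
    (z : ℤ → ℝ) (hmono : StrictMono z)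
    (hrange : ∀ k : ℤ, z k ∈ Set.Ioo (0:ℝ) 1)
    (hinf : IsGLB (Set.range z) 0) (hsup : IsLUB (Set.range z) 1)
    (hc : ∀ k : ℤ, u (z k) = c)
    (hholder : ∀ k : ℤ, ∀ x ∈ Set.Icc (z k) (z (k + 1)), ∀ y ∈ Set.Icc (z k) (z (k + 1)),
      |u y - u x| ≤ B * |y - x| ^ α) :
    ∀ x ∈ Set.Ioo (0:ℝ) 1, ∀ y ∈ Set.Ioo (0:ℝ) 1,
      |u y - u x| ≤ 2 * B * |y - x| ^ α :=
  holder_glue_along_partition_general u α B c hα hB z hmono hinf hsup hc hholder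
end

section
/- Let f : [0,1] → [0,1] be defined by f(x) = 2x/(x+1), with n-th iterate fⁿ(x) = 2ⁿx/((2ⁿ − 1)x + 1). Then for all x, y ∈ [1/2, 2/3] and every n ≥ 0, |fⁿ(x) − fⁿ(y)| = 2ⁿ|x − y| / ([(2ⁿ−1)x + 1]·[(2ⁿ−1)y + 1]), and in particular |fⁿ(x) − fⁿ(y)| ≤ 2^{−n}. -/
/-!
The map `f x = 2x/(x+1)` is the member `a = 2` of the family `x ↦ ax/((a-1)x+1)` of Möbius maps
fixing `0` and `1`, which is multiplicative in `a`; hence `fⁿ` is the member `a = 2ⁿ`, and the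
difference of two values is an explicit fraction. On `[1/2, 2/3]` both denominators are at least
`(2ⁿ+1)/2` and `|x - y| ≤ 1/6`, which gives the bound `2⁻ⁿ`.
-/

noncomputable def moebiusDilation (a x : ℝ) : ℝ := a * x / ((a - 1) * x + 1)

namespace moebiusDilation

lemma two_eq : moebiusDilation 2 = fun x => 2 * x / (x + 1) := by
  funext x
  norm_num [moebiusDilation]

-- If the outer denominator vanishes, so does the one on the right, and both sides are `0`.
lemma comp_apply {a b x : ℝ} (hx : (b - 1) * x + 1 ≠ 0) :
    moebiusDilation a (moebiusDilation b x) = moebiusDilation (a * b) x := by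
  unfold moebiusDilation
  have hden : (a - 1) * (b * x / ((b - 1) * x + 1)) + 1 =
      ((a * b - 1) * x + 1) / ((b - 1) * x + 1) := by
    rw [eq_div_iff hx, add_mul, mul_assoc, div_mul_cancel₀ _ hx]
    ring
  rw [hden, mul_div_assoc', div_div_div_cancel_right₀ hx, mul_assoc]

lemma denom_pos {a x : ℝ} (ha : 1 ≤ a) (hx : 0 ≤ x) : 0 < (a - 1) * x + 1 := by
  nlinarith

lemma iterate_apply {a x : ℝ} (ha : 1 ≤ a) (hx : 0 ≤ x) (n : ℕ) :
    (moebiusDilation a)^[n] x = moebiusDilation (a ^ n) x := by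
  induction n with
  | zero => simp [moebiusDilation]
  | succ n ih =>
    rw [Function.iterate_succ_apply', ih, pow_succ',
      comp_apply (denom_pos (one_le_pow₀ ha) hx).ne']

lemma sub_eq {a x y : ℝ} (hx : (a - 1) * x + 1 ≠ 0) (hy : (a - 1) * y + 1 ≠ 0) :
    moebiusDilation a x - moebiusDilation a y =
      a * (x - y) / (((a - 1) * x + 1) * ((a - 1) * y + 1)) := by
  unfold moebiusDilation
  rw [div_sub_div _ _ hx hy]
  ring

lemma abs_sub_eq {a x y : ℝ} (ha : 1 ≤ a) (hx : 0 ≤ x) (hy : 0 ≤ y) :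
    |moebiusDilation a x - moebiusDilation a y| =
      a * |x - y| / (((a - 1) * x + 1) * ((a - 1) * y + 1)) := by
  have hdx := denom_pos ha hx
  have hdy := denom_pos ha hy
  rw [sub_eq hdx.ne' hdy.ne', abs_div, abs_mul, abs_of_nonneg (by linarith : 0 ≤ a),
    abs_of_pos (mul_pos hdx hdy)]

lemma abs_sub_le_inv {a x y : ℝ} (ha : 1 ≤ a)
    (hx : x ∈ Set.Icc (1/2 : ℝ) (2/3)) (hy : y ∈ Set.Icc (1/2 : ℝ) (2/3)) :
    |moebiusDilation a x - moebiusDilation a y| ≤ 1 / a := by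
  obtain ⟨hx₁, hx₂⟩ := hx
  obtain ⟨hy₁, hy₂⟩ := hy
  have hxy : |x - y| ≤ 1 / 6 := abs_sub_le_iff.2 ⟨by linarith, by linarith⟩
  have hdx : (a + 1) / 2 ≤ (a - 1) * x + 1 := by nlinarith
  have hdy : (a + 1) / 2 ≤ (a - 1) * y + 1 := by nlinarith
  have hprod : (a + 1) ^ 2 / 4 ≤ ((a - 1) * x + 1) * ((a - 1) * y + 1) := by
    nlinarith [mul_le_mul hdx hdy (by linarith) (by linarith)]
  rw [abs_sub_eq ha (by linarith) (by linarith), div_le_div_iff₀ (by nlinarith) (by linarith)]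
  nlinarith [abs_nonneg (x - y), mul_le_mul hxy hprod (by positivity) (by norm_num)]

end moebiusDilation

/-- **Contraction of the fundamental domain `[1/2, 2/3]` under `f(x) = 2x/(x+1)`:**
for all `x, y ∈ [1/2, 2/3]` and `n ≥ 0`,
`|fⁿ(x) - fⁿ(y)| = 2ⁿ|x-y| / ([(2ⁿ-1)x+1]·[(2ⁿ-1)y+1]) ≤ 2^{-n}`. -/
theorem iterate_contraction_on_fundamental_domain
    (f : ℝ → ℝ) (hf : f = fun x => 2 * x / (x + 1)) :
    ∀ n : ℕ, ∀ x ∈ Set.Icc (1/2 : ℝ) (2/3), ∀ y ∈ Set.Icc (1/2 : ℝ) (2/3),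
      |f^[n] x - f^[n] y| =
        2 ^ n * |x - y| / (((2 ^ n - 1) * x + 1) * ((2 ^ n - 1) * y + 1)) ∧
      |f^[n] x - f^[n] y| ≤ 1 / 2 ^ n := by
  rw [← moebiusDilation.two_eq] at hf
  subst hf
  intro n x hx y hy
  have h2n : (1 : ℝ) ≤ 2 ^ n := one_le_pow₀ one_le_two
  have hx₀ : 0 ≤ x := by linarith [hx.1]
  have hy₀ : 0 ≤ y := by linarith [hy.1]
  rw [moebiusDilation.iterate_apply one_le_two hx₀, moebiusDilation.iterate_apply one_le_two hy₀]
  exact ⟨moebiusDilation.abs_sub_eq h2n hx₀ hy₀, moebiusDilation.abs_sub_le_inv h2n hx hy⟩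
end

section
/- Let f : [0,1] → [0,1] be f(x) = 2x/(x+1), let a := 8/15 and b := 17/30, and let I* > 0 be a constant. For each n ≥ 1 let g_n be a C¹ diffeomorphism of [1/2, 2/3] with positive derivative such that g_n(a) = a, Dg_n(a) = 1, g_n(b) = b + I*/n, and Dg_n(b) = 1 + 1/n. Then D(fⁿ∘g_n∘f^{−n})(fⁿ(a)) = 1, there is a constant C' > 0 such that |D(fⁿ∘g_n∘f^{−n})(fⁿ(b)) − 1| ≥ C'/n for all sufficiently large n, and consequently, for every α > 0, the Hölder quotient |D(fⁿ∘g_n∘f^{−n})(fⁿ(b)) − D(fⁿ∘g_n∘f^{−n})(fⁿ(a))| / |fⁿ(b) − fⁿ(a)|^α tends to +∞ as n → ∞. In particular, the diffeomorphism g of [0,1] defined by g = fⁿ∘g_n∘f^{−n} on each fⁿ([1/2,2/3]) is not of class C^{1+α} for any α ∈ (0,1), even when g_n → Id in the C^∞ topology. -/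
open Set Filter
noncomputable def Fk (n : ℕ) (x : ℝ) : ℝ := 2 ^ n * x / ((2 ^ n - 1) * x + 1)
noncomputable def Gk (n : ℕ) (x : ℝ) : ℝ := x / (2 ^ n - (2 ^ n - 1) * x)
lemma two_pow_one_le (n : ℕ) : (1 : ℝ) ≤ 2 ^ n := one_le_pow₀ (by norm_num)
lemma Fden_pos (n : ℕ) {x : ℝ} (hx : 0 ≤ x) : 0 < (2 ^ n - 1) * x + 1 := by
  nlinarith [two_pow_one_le n]
lemma Gden_pos (n : ℕ) {x : ℝ} (hx : x ≤ 1) : 0 < 2 ^ n - (2 ^ n - 1) * x := by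
  nlinarith [two_pow_one_le n]
lemma Gden_eq (n : ℕ) {x : ℝ} (hx : 0 ≤ x) :
    2 ^ n - (2 ^ n - 1) * Fk n x = 2 ^ n / ((2 ^ n - 1) * x + 1) := by
  have hd := Fden_pos n hx
  rw [Fk]; field_simp; ring
lemma iter_f_eq (n : ℕ) {x : ℝ} (hx : 0 < x) :
    (fun x : ℝ => 2 * x / (x + 1))^[n] x = Fk n x := by
  induction n with
  | zero => simp [Fk]
  | succ n ih =>
    rw [Function.iterate_succ_apply', ih]
    have hd : (0:ℝ) < (2 ^ n - 1) * x + 1 := Fden_pos n hx.le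
    have hd' : (0:ℝ) < (2 ^ (n+1) - 1) * x + 1 := Fden_pos (n+1) hx.le
    have h1 : Fk n x + 1 ≠ 0 := by
      have : 0 < Fk n x := div_pos (by positivity) hd
      linarith
    simp only [Fk] at h1 ⊢
    rw [pow_succ] at hd' ⊢
    field_simp
    have hne : x * (2 ^ n - 1) + 1 ≠ 0 := ne_of_gt (by linarith [hd, mul_comm x ((2:ℝ) ^ n - 1)])
    rw [mul_add, mul_div_cancel₀ _ hne]
    ring
lemma Gk_Fk (n : ℕ) {x : ℝ} (hx : 0 < x) : Gk n (Fk n x) = x := by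
  have hd := Fden_pos n hx.le
  rw [Gk, Gden_eq n hx.le, Fk]
  have h2 : (2:ℝ) ^ n ≠ 0 := by positivity
  field_simp
  exact div_self (ne_of_gt (by linarith [hd, mul_comm x ((2:ℝ) ^ n - 1)]))
lemma Fk_lt (n : ℕ) {x y : ℝ} (hx : 0 ≤ x) (hxy : x < y) : Fk n x < Fk n y := by
  have hdx := Fden_pos n hx
  have hdy := Fden_pos n (by linarith : (0:ℝ) ≤ y)
  rw [Fk, Fk, div_lt_div_iff₀ hdx hdy]
  nlinarith [two_pow_one_le n]
lemma Fk_zero (n : ℕ) : Fk n 0 = 0 := by simp [Fk]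
lemma Fk_one (n : ℕ) : Fk n 1 = 1 := by
  have h := Fden_pos n (zero_le_one (α := ℝ))
  rw [Fk]
  have h : (2:ℝ) ^ n - 1 + 1 = 2 ^ n := by ring
  rw [mul_one, mul_one, h, div_self (by positivity)]
lemma Fk_mem (n : ℕ) {x : ℝ} (hx : x ∈ Ioo (0:ℝ) 1) : Fk n x ∈ Ioo (0:ℝ) 1 := by
  constructor
  · have := Fk_lt n le_rfl hx.1; rwa [Fk_zero] at this
  · have := Fk_lt n hx.1.le hx.2; rwa [Fk_one] at this
lemma Gk_lt (n : ℕ) {x y : ℝ} (hy : y ≤ 1) (hxy : x < y) : Gk n x < Gk n y := by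
  have hdx := Gden_pos n (by linarith : x ≤ 1)
  have hdy := Gden_pos n hy
  rw [Gk, Gk, div_lt_div_iff₀ hdx hdy]
  nlinarith [two_pow_one_le n]
lemma iter_finv_eq (n : ℕ) {x : ℝ} (hx : x ∈ Ioo (0:ℝ) 1) :
    (fun x : ℝ => x / (2 - x))^[n] x = Gk n x := by
  induction n generalizing x with
  | zero => simp [Gk]
  | succ n ih =>
    rw [Function.iterate_succ_apply]
    have h2 : (0:ℝ) < 2 - x := by linarith [hx.2]
    have hfx : x / (2 - x) ∈ Ioo (0:ℝ) 1 := by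
      constructor
      · exact div_pos hx.1 h2
      · rw [div_lt_one h2]; linarith [hx.2]
    rw [ih hfx]
    have hdg := Gden_pos n hfx.2.le
    have hD : (0:ℝ) < 2 ^ (n+1) - (2 ^ (n+1) - 1) * x := Gden_pos (n+1) hx.2.le
    rw [pow_succ] at hD
    rw [Gk, Gk, pow_succ]
    rw [div_div]
    congr 1
    field_simp
    ring

lemma hasDerivAt_Fk (n : ℕ) {x : ℝ} (hx : 0 ≤ x) :
    HasDerivAt (Fk n) (2 ^ n / ((2 ^ n - 1) * x + 1) ^ 2) x := by
  have hd := Fden_pos n hx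
  have h1 : HasDerivAt (fun x : ℝ => 2 ^ n * x) (2 ^ n) x := by
    simpa using (hasDerivAt_id x).const_mul (2 ^ n : ℝ)
  have h2 : HasDerivAt (fun x : ℝ => (2 ^ n - 1) * x + 1) (2 ^ n - 1) x := by
    simpa using ((hasDerivAt_id x).const_mul ((2:ℝ) ^ n - 1)).add_const 1
  have := h1.div h2 hd.ne'
  exact this.congr_deriv (by ring)

lemma hasDerivAt_Gk (n : ℕ) {x : ℝ} (hx : x ≤ 1) :
    HasDerivAt (Gk n) (2 ^ n / (2 ^ n - (2 ^ n - 1) * x) ^ 2) x := by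
  have hd := Gden_pos n hx
  have h1 : HasDerivAt (fun x : ℝ => x) (1:ℝ) x := hasDerivAt_id x
  have h2 : HasDerivAt (fun x : ℝ => 2 ^ n - (2 ^ n - 1) * x) (-(2 ^ n - 1)) x := by
    simpa using ((hasDerivAt_id x).const_mul ((2:ℝ) ^ n - 1)).const_sub (2 ^ n : ℝ)
  have := h1.div h2 hd.ne'
  exact this.congr_deriv (by ring)

lemma iter_f_eventuallyEq (n : ℕ) {x : ℝ} (hx : 0 < x) :
    (fun x : ℝ => 2 * x / (x + 1))^[n] =ᶠ[nhds x] Fk n :=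
  Filter.eventuallyEq_of_mem (isOpen_Ioi.mem_nhds hx) (fun y hy => iter_f_eq n hy)

lemma iter_finv_eventuallyEq (n : ℕ) {x : ℝ} (hx : x ∈ Ioo (0:ℝ) 1) :
    (fun x : ℝ => x / (2 - x))^[n] =ᶠ[nhds x] Gk n :=
  Filter.eventuallyEq_of_mem (isOpen_Ioo.mem_nhds hx) (fun y hy => iter_finv_eq n hy)

lemma key_deriv (n : ℕ) (g : ℝ → ℝ) (hgd : Differentiable ℝ g)
    {x : ℝ} (hx : x ∈ Ioo (0:ℝ) 1) (hgx : 0 < g x) :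
    deriv ((fun x : ℝ => 2 * x / (x + 1))^[n] ∘ g ∘ (fun x : ℝ => x / (2 - x))^[n])
        ((fun x : ℝ => 2 * x / (x + 1))^[n] x)
      = ((2 ^ n - 1) * x + 1) ^ 2 / ((2 ^ n - 1) * g x + 1) ^ 2 * deriv g x := by
  have hp : Fk n x ∈ Ioo (0:ℝ) 1 := Fk_mem n hx
  rw [iter_f_eq n hx.1]
  set p := Fk n x with hpdef
  have hA0 : HasDerivAt (Gk n) (2 ^ n / (2 ^ n - (2 ^ n - 1) * p) ^ 2) p :=
    hasDerivAt_Gk n hp.2.le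
  have hA : HasDerivAt ((fun x : ℝ => x / (2 - x))^[n])
      (2 ^ n / (2 ^ n - (2 ^ n - 1) * p) ^ 2) p :=
    hA0.congr_of_eventuallyEq (iter_finv_eventuallyEq n hp)
  have hGkp : Gk n p = x := Gk_Fk n hx.1
  have hfinvp : (fun x : ℝ => x / (2 - x))^[n] p = x := by
    rw [iter_finv_eq n hp, hGkp]
  have hB : HasDerivAt g (deriv g x) ((fun x : ℝ => x / (2 - x))^[n] p) := by
    rw [hfinvp]; exact (hgd x).hasDerivAt
  have hBA := hB.comp p hA
  have hC0 : HasDerivAt (Fk n) (2 ^ n / ((2 ^ n - 1) * g x + 1) ^ 2) (g x) :=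
    hasDerivAt_Fk n hgx.le
  have hC : HasDerivAt ((fun x : ℝ => 2 * x / (x + 1))^[n])
      (2 ^ n / ((2 ^ n - 1) * g x + 1) ^ 2)
      ((g ∘ (fun x : ℝ => x / (2 - x))^[n]) p) := by
    show HasDerivAt _ _ (g ((fun x : ℝ => x / (2 - x))^[n] p))
    rw [hfinvp]
    exact hC0.congr_of_eventuallyEq (iter_f_eventuallyEq n hgx)
  have htot := hC.comp p hBA
  rw [htot.deriv]
  rw [hpdef, Gden_eq n hx.1.le]
  have hd := Fden_pos n hx.1.le
  have hdg := Fden_pos n hgx.le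
  have h2 : (2:ℝ) ^ n ≠ 0 := by positivity
  field_simp

lemma Fk_Gk (n : ℕ) {y : ℝ} (h1 : y ≤ 1) : Fk n (Gk n y) = y := by
  have hD := Gden_pos n h1
  rw [Fk, Gk]
  have h2 : (2:ℝ) ^ n ≠ 0 := by positivity
  have hden : (2 ^ n - 1) * (y / (2 ^ n - (2 ^ n - 1) * y)) + 1
      = 2 ^ n / (2 ^ n - (2 ^ n - 1) * y) := by
    field_simp
    ring
  rw [hden]
  field_simp
  rw [mul_div_assoc, div_self (ne_of_gt (by linarith [hD, mul_comm y ((2:ℝ) ^ n - 1)])), mul_one]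

lemma ineq2 {m c I : ℝ} (hm : 1 ≤ m) (hc : 1 ≤ c) (hI0 : 0 < I) (hI : I ≤ 1/10) :
    1 + 89 / (200 * m) ≤
      (c * (17/30) + 1) ^ 2 / (c * (17/30 + I/m) + 1) ^ 2 * (1 + 1/m) := by
  have hm0 : (0:ℝ) < m := by linarith
  set u : ℝ := c * (17/30) + 1 with hu
  set s : ℝ := c * I / m with hs
  have hu0 : 0 < u := by rw [hu]; nlinarith
  have hs0 : 0 < s := by rw [hs]; positivity
  have hms : m * s = c * I := by rw [hs]; field_simp
  have h17 : 17 * (m * s) ≤ 3 * u := by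
    rw [hms, hu]; nlinarith
  have hv : c * (17/30 + I/m) + 1 = u + s := by
    rw [hu, hs]; field_simp; ring
  rw [hv]
  have hv0 : 0 < u + s := by linarith
  have P : (200*m+89) * (u+s)^2 ≤ 200 * u^2 * (m+1) := by
    nlinarith [mul_nonneg (mul_nonneg hs0.le hs0.le) hm0.le, sq_nonneg (m*s),
      mul_nonneg (sub_nonneg.2 h17) (mul_nonneg hs0.le hm0.le),
      mul_nonneg (sub_nonneg.2 h17) hs0.le,
      mul_nonneg (mul_nonneg (sub_nonneg.2 h17) hs0.le) (sub_nonneg.2 hm),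
      mul_nonneg (mul_nonneg (sub_nonneg.2 h17) hu0.le) (sub_nonneg.2 hm),
      mul_nonneg (mul_nonneg (mul_nonneg (sub_nonneg.2 h17) hu0.le) (sub_nonneg.2 hm)) hm0.le,
      mul_nonneg (mul_nonneg (mul_nonneg (sub_nonneg.2 h17) hs0.le) (sub_nonneg.2 hm)) hm0.le]
  have heq : u^2 / (u+s)^2 * (1 + 1/m) = (u^2 * (m+1)) / ((u+s)^2 * m) := by
    field_simp
  rw [heq, le_div_iff₀ (by positivity)]
  have heq2 : (1 + 89/(200*m)) * ((u+s)^2 * m) = (200*m+89) * (u+s)^2 / 200 := by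
    field_simp
  rw [heq2, div_le_iff₀ (by norm_num : (0:ℝ) < 200)]
  nlinarith [P]

lemma Fk_diff_le (n : ℕ) : Fk n (17/30) - Fk n (8/15) ≤ (1/2) ^ n := by
  have hc := two_pow_one_le n
  set c : ℝ := 2 ^ n with hcdef
  have hda : (0:ℝ) < (c - 1) * (8/15) + 1 := Fden_pos n (by norm_num)
  have hdb : (0:ℝ) < (c - 1) * (17/30) + 1 := Fden_pos n (by norm_num)
  have hc0 : (0:ℝ) < c := by linarith
  have hhalf : ((1:ℝ)/2) ^ n = 1 / c := by
    rw [hcdef, div_pow, one_pow, one_div]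
  rw [Fk, Fk, div_sub_div _ _ hdb.ne' hda.ne', hhalf,
    div_le_div_iff₀ (mul_pos hdb hda) hc0]
  nlinarith [sq_nonneg c]

/-- **No strong Kopell lemma in class `C^{1+α}` (Appendix):** for `f(x) = 2x/(x+1)` with
inverse `finv(x) = x/(2-x)`, `a = 8/15`, `b = 17/30`, `I* > 0`, and `C¹` diffeomorphisms
`gₙ` of `[1/2, 2/3]` with positive derivative satisfying `gₙ(a) = a`, `Dgₙ(a) = 1`,
`gₙ(b) = b + I*/n`, `Dgₙ(b) = 1 + 1/n`:
(1) `D(fⁿ∘gₙ∘f^{-n})(fⁿ(a)) = 1`;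
(2) there is `C' > 0` with `|D(fⁿ∘gₙ∘f^{-n})(fⁿ(b)) - 1| ≥ C'/n` for all large `n`;
(3) for every `α > 0` the Hölder quotient
    `|D(fⁿ∘gₙ∘f^{-n})(fⁿ(b)) - D(fⁿ∘gₙ∘f^{-n})(fⁿ(a))| / |fⁿ(b) - fⁿ(a)|^α → ∞`;
(4) in particular, any differentiable `G` equal to `fⁿ∘gₙ∘f^{-n}` on each
    `fⁿ([1/2, 2/3])` is not of class `C^{1+α}` on `[0,1]` for any `α ∈ (0,1)`. -/
theorem no_strong_kopell_lemma_in_C_one_plus_alpha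
    (f finv : ℝ → ℝ)
    (hf : f = fun x => 2 * x / (x + 1))
    (hfinv : finv = fun x => x / (2 - x))
    (a b Istar : ℝ) (ha : a = 8 / 15) (hb : b = 17 / 30) (hI : 0 < Istar)
    (g : ℕ → ℝ → ℝ)
    (hg : ∀ n : ℕ, 1 ≤ n → ContDiff ℝ 1 (g n))
    (hgbij : ∀ n : ℕ, 1 ≤ n →
      Set.BijOn (g n) (Set.Icc (1/2 : ℝ) (2/3)) (Set.Icc (1/2 : ℝ) (2/3)))
    (hg' : ∀ n : ℕ, 1 ≤ n → ∀ x ∈ Set.Icc (1/2 : ℝ) (2/3), 0 < deriv (g n) x)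
    (hga : ∀ n : ℕ, 1 ≤ n → g n a = a)
    (hga' : ∀ n : ℕ, 1 ≤ n → deriv (g n) a = 1)
    (hgb : ∀ n : ℕ, 1 ≤ n → g n b = b + Istar / n)
    (hgb' : ∀ n : ℕ, 1 ≤ n → deriv (g n) b = 1 + 1 / n) :
    (∀ n : ℕ, 1 ≤ n → deriv (f^[n] ∘ g n ∘ finv^[n]) (f^[n] a) = 1) ∧
    (∃ C' : ℝ, 0 < C' ∧ ∃ N₀ : ℕ, ∀ n : ℕ, N₀ ≤ n →
      C' / n ≤ |deriv (f^[n] ∘ g n ∘ finv^[n]) (f^[n] b) - 1|) ∧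
    (∀ α : ℝ, 0 < α →
      Filter.Tendsto
        (fun n : ℕ =>
          |deriv (f^[n] ∘ g n ∘ finv^[n]) (f^[n] b) -
              deriv (f^[n] ∘ g n ∘ finv^[n]) (f^[n] a)| /
            |f^[n] b - f^[n] a| ^ α)
        Filter.atTop Filter.atTop) ∧
    (∀ G : ℝ → ℝ, Differentiable ℝ G →
      (∀ n : ℕ, 1 ≤ n → ∀ x ∈ Set.Icc (1/2 : ℝ) (2/3), G (f^[n] x) = f^[n] (g n x)) →
      ∀ α : ℝ, 0 < α → α < 1 →
        ¬ ∃ M : ℝ, ∀ x ∈ Set.Icc (0:ℝ) 1, ∀ y ∈ Set.Icc (0:ℝ) 1,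
          |deriv G y - deriv G x| ≤ M * |y - x| ^ α) := by
  subst hf hfinv ha hb
  have hbIcc : (17/30 : ℝ) ∈ Icc (1/2 : ℝ) (2/3) := by norm_num
  have haIcc : (8/15 : ℝ) ∈ Icc (1/2 : ℝ) (2/3) := by norm_num
  have haIoo : (8/15 : ℝ) ∈ Ioo (0:ℝ) 1 := by norm_num
  have hbIoo : (17/30 : ℝ) ∈ Ioo (0:ℝ) 1 := by norm_num
  -- Istar ≤ 1/10
  have hIle : Istar ≤ 1/10 := by
    have h := (hgbij 1 le_rfl).mapsTo hbIcc
    rw [hgb 1 le_rfl] at h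
    have h2 := h.2
    norm_num at h2
    linarith
  have hdiffg : ∀ n : ℕ, 1 ≤ n → Differentiable ℝ (g n) := fun n hn =>
    (hg n hn).differentiable one_ne_zero
  have hcast : ∀ n : ℕ, 1 ≤ n → (1:ℝ) ≤ (n:ℝ) := fun n hn => by exact_mod_cast hn
  have hc1 : ∀ n : ℕ, 1 ≤ n → (1:ℝ) ≤ (2:ℝ) ^ n - 1 := by
    intro n hn
    have : (2:ℝ) ^ 1 ≤ 2 ^ n := pow_le_pow_right₀ (by norm_num) hn
    norm_num at this
    linarith
  -- Part 1
  have P1 : ∀ n : ℕ, 1 ≤ n →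
      deriv ((fun x : ℝ => 2*x/(x+1))^[n] ∘ g n ∘ (fun x : ℝ => x/(2-x))^[n])
        ((fun x : ℝ => 2*x/(x+1))^[n] (8/15)) = 1 := by
    intro n hn
    have hga0 : 0 < g n (8/15) := by rw [hga n hn]; norm_num
    rw [key_deriv n (g n) (hdiffg n hn) haIoo hga0, hga n hn, hga' n hn]
    have hd := Fden_pos n (show (0:ℝ) ≤ 8/15 by norm_num)
    rw [mul_one, div_self (by positivity)]
  -- Part 2 quantitative bound
  have P2 : ∀ n : ℕ, 1 ≤ n →
      (89/200 : ℝ) / n ≤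
      |deriv ((fun x : ℝ => 2*x/(x+1))^[n] ∘ g n ∘ (fun x : ℝ => x/(2-x))^[n])
        ((fun x : ℝ => 2*x/(x+1))^[n] (17/30)) - 1| := by
    intro n hn
    have hgb0 : 0 < g n (17/30) := by
      have h := (hgbij n hn).mapsTo hbIcc
      have := h.1; linarith
    rw [key_deriv n (g n) (hdiffg n hn) hbIoo hgb0, hgb n hn, hgb' n hn]
    have hkey := ineq2 (hcast n hn) (hc1 n hn) hI hIle
    have hn0 : (0:ℝ) < n := by linarith [hcast n hn]
    have h89 : (0:ℝ) < 89 / (200 * (n:ℝ)) := by positivity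
    have hle : 1 + 89 / (200 * (n:ℝ)) ≤
        ((2 ^ n - 1) * (17/30) + 1) ^ 2 / ((2 ^ n - 1) * (17/30 + Istar/n) + 1) ^ 2
          * (1 + 1/n) := by
      convert hkey using 3 <;> ring
    rw [abs_of_nonneg (by linarith)]
    calc (89/200 : ℝ) / n = 89 / (200 * n) := by ring
    _ ≤ _ := by linarith
  -- closed forms
  have hfb : ∀ n : ℕ, (fun x : ℝ => 2*x/(x+1))^[n] (17/30) = Fk n (17/30) :=
    fun n => iter_f_eq n (by norm_num)
  have hfa : ∀ n : ℕ, (fun x : ℝ => 2*x/(x+1))^[n] (8/15) = Fk n (8/15) :=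
    fun n => iter_f_eq n (by norm_num)
  have hdpos : ∀ n : ℕ, 0 < Fk n (17/30) - Fk n (8/15) := fun n =>
    sub_pos.2 (Fk_lt n (by norm_num) (by norm_num))
  -- Part 3
  have P3 : ∀ α : ℝ, 0 < α →
      Filter.Tendsto (fun n : ℕ =>
        |deriv ((fun x : ℝ => 2*x/(x+1))^[n] ∘ g n ∘ (fun x : ℝ => x/(2-x))^[n])
            ((fun x : ℝ => 2*x/(x+1))^[n] (17/30)) -
          deriv ((fun x : ℝ => 2*x/(x+1))^[n] ∘ g n ∘ (fun x : ℝ => x/(2-x))^[n])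
            ((fun x : ℝ => 2*x/(x+1))^[n] (8/15))| /
          |(fun x : ℝ => 2*x/(x+1))^[n] (17/30) - (fun x : ℝ => 2*x/(x+1))^[n] (8/15)| ^ α)
        Filter.atTop Filter.atTop := by
    intro α hα
    set s : ℝ := (2:ℝ) ^ (α/2) with hsdef
    have hs1 : 1 < s := by
      rw [hsdef]
      exact (Real.one_lt_rpow_iff_of_pos (by norm_num)).2 (Or.inl ⟨one_lt_two, by linarith⟩)
    have hs0 : 0 < s := lt_trans one_pos hs1
    have hC : (0:ℝ) < (89/200) * (s - 1) := by nlinarith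
    apply tendsto_atTop_mono' atTop ?_
      ((tendsto_pow_atTop_atTop_of_one_lt hs1).const_mul_atTop hC)
    filter_upwards [eventually_ge_atTop 1] with n hn
    have hn0 : (0:ℝ) < n := by exact_mod_cast Nat.lt_of_lt_of_le Nat.zero_lt_one hn
    have hd := hdpos n
    have hdle := Fk_diff_le n
    have hpow : ((1/2 : ℝ) ^ n) ^ α = (s ^ n * s ^ n)⁻¹ := by
      have h1 : ((1/2 : ℝ) ^ n) ^ α = ((2:ℝ) ^ ((n:ℝ) * α))⁻¹ := by
        rw [show ((1:ℝ)/2) = 2⁻¹ by norm_num, inv_pow,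
          Real.inv_rpow (by positivity), ← Real.rpow_natCast (2:ℝ) n,
          ← Real.rpow_mul (by norm_num)]
      have h2 : s ^ n * s ^ n = (2:ℝ) ^ ((n:ℝ) * α) := by
        rw [hsdef, ← Real.rpow_natCast ((2:ℝ) ^ (α/2)) n,
          ← Real.rpow_mul (by norm_num : (0:ℝ) ≤ 2),
          ← Real.rpow_add (by norm_num : (0:ℝ) < 2)]
        congr 1
        ring
      rw [h1, h2]
    have hbern : (n:ℝ) * (s - 1) ≤ s ^ n := by
      have h := one_add_mul_le_pow (by linarith : (-2:ℝ) ≤ s - 1) n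
      have h2 : (1:ℝ) + (s - 1) = s := by ring
      rw [h2] at h
      linarith
    rw [P1 n hn, hfb, hfa, abs_of_pos hd]
    have hdα_pos : 0 < (Fk n (17/30) - Fk n (8/15)) ^ α := Real.rpow_pos_of_pos hd α
    have hdα_le : (Fk n (17/30) - Fk n (8/15)) ^ α ≤ ((1/2:ℝ) ^ n) ^ α :=
      Real.rpow_le_rpow hd.le hdle hα.le
    have hP2 := P2 n hn
    rw [hfb] at hP2
    calc (89/200 : ℝ) * (s - 1) * s ^ n
        ≤ (89/200) * (s ^ n * s ^ n) / n := by
          rw [le_div_iff₀ hn0]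
          nlinarith [mul_le_mul_of_nonneg_left hbern
            (by positivity : (0:ℝ) ≤ (89/200) * s ^ n)]
      _ = (89/200) / n / (((1/2:ℝ) ^ n) ^ α) := by rw [hpow, div_eq_mul_inv ((89:ℝ)/200/↑n) ((s^n*s^n)⁻¹), inv_inv]; ring
      _ ≤ (89/200) / n / ((Fk n (17/30) - Fk n (8/15)) ^ α) := by
          gcongr
      _ ≤ _ := by gcongr
  refine ⟨P1, ⟨89/200, by norm_num, 1, P2⟩, P3, ?_⟩
  rintro G hGd hGeq α hα hα1 ⟨M, hM⟩
  -- deriv G agrees with deriv of the conjugated map on the image interval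
  have hagree : ∀ n : ℕ, 1 ≤ n → ∀ p ∈ Ioo (1/2:ℝ) (2/3),
      deriv G (Fk n p) =
      deriv ((fun x : ℝ => 2*x/(x+1))^[n] ∘ g n ∘ (fun x : ℝ => x/(2-x))^[n]) (Fk n p) := by
    intro n hn p hp
    apply Filter.EventuallyEq.deriv_eq
    have hmem : Fk n p ∈ Ioo (Fk n (1/2)) (Fk n (2/3)) :=
      ⟨Fk_lt n (by norm_num) hp.1, Fk_lt n (by linarith [hp.1]) hp.2⟩
    apply Filter.eventuallyEq_of_mem (isOpen_Ioo.mem_nhds hmem)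
    intro y hy
    have h23 : Fk n (2/3) < 1 := (Fk_mem n (by norm_num)).2
    have h12 : 0 < Fk n (1/2) := (Fk_mem n (by norm_num)).1
    have hy01 : y ∈ Ioo (0:ℝ) 1 := ⟨lt_trans h12 hy.1, lt_trans hy.2 h23⟩
    have hx12 : (1/2:ℝ) < Gk n y := by
      have h := Gk_lt n hy01.2.le hy.1
      rwa [Gk_Fk n (by norm_num : (0:ℝ) < 1/2)] at h
    have hx23 : Gk n y < 2/3 := by
      have h := Gk_lt n h23.le hy.2
      rwa [Gk_Fk n (by norm_num : (0:ℝ) < 2/3)] at h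
    have hGy : G y = (fun x : ℝ => 2*x/(x+1))^[n] (g n (Gk n y)) := by
      conv_lhs => rw [show y = (fun x : ℝ => 2*x/(x+1))^[n] (Gk n y) from by
        rw [iter_f_eq n (by linarith : (0:ℝ) < Gk n y), Fk_Gk n hy01.2.le]]
      exact hGeq n hn (Gk n y) ⟨by linarith, by linarith⟩
    show G y = _
    simp only [Function.comp_apply]
    rw [iter_finv_eq n hy01, hGy]
  -- pick a large n from the divergence of the Hölder quotient
  obtain ⟨n, hMn, hn⟩ :=
    ((tendsto_atTop.1 (P3 α hα) (M+1)).and (eventually_ge_atTop 1)).exists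
  have hfbn := hfb n
  have hfan := hfa n
  have hbI : Fk n (17/30) ∈ Ioo (0:ℝ) 1 := Fk_mem n hbIoo
  have haI : Fk n (8/15) ∈ Ioo (0:ℝ) 1 := Fk_mem n haIoo
  have hHol := hM ((fun x : ℝ => 2*x/(x+1))^[n] (8/15))
    (by rw [hfan]; exact Ioo_subset_Icc_self haI)
    ((fun x : ℝ => 2*x/(x+1))^[n] (17/30))
    (by rw [hfbn]; exact Ioo_subset_Icc_self hbI)
  have e1 : deriv G ((fun x : ℝ => 2*x/(x+1))^[n] (17/30)) =
      deriv ((fun x : ℝ => 2*x/(x+1))^[n] ∘ g n ∘ (fun x : ℝ => x/(2-x))^[n])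
        ((fun x : ℝ => 2*x/(x+1))^[n] (17/30)) := by
    rw [hfbn]; exact hagree n hn (17/30) (by norm_num)
  have e2 : deriv G ((fun x : ℝ => 2*x/(x+1))^[n] (8/15)) = 1 := by
    rw [hfan, hagree n hn (8/15) (by norm_num), ← hfan, P1 n hn]
  rw [e1, e2] at hHol
  rw [P1 n hn] at hMn
  have hd := hdpos n
  have hdabs : |(fun x : ℝ => 2*x/(x+1))^[n] (17/30) -
      (fun x : ℝ => 2*x/(x+1))^[n] (8/15)| > 0 := by
    rw [hfbn, hfan, abs_of_pos hd]; exact hd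
  have hdα : (0:ℝ) < |(fun x : ℝ => 2*x/(x+1))^[n] (17/30) -
      (fun x : ℝ => 2*x/(x+1))^[n] (8/15)| ^ α := Real.rpow_pos_of_pos hdabs α
  rw [le_div_iff₀ hdα] at hMn
  linarith
end
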